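/- arXiv:2311.03740 — 11 statements merged into one kernel-verified Lean document; each statement's English description precedes it below -/
import Mathlib

section
/- Let p be an odd prime, let λ be an element of ZMod p, and let s, t be natural numbers with 1 ≤ s ≤ p-2 and 1 ≤ t ≤ p-2. Then in ZMod p, the sum ∑_{b=1}^{p-1} (λ - b)^s · b^t equals 0 if s + t < p - 1, and equals (-1)^{t+1} · binom(s, p-1-t) · λ^{s+t-(p-1)} if s + t ≥ p - 1. -/
open Finset

lemma aux_sum_pow (p : ℕ) [Fact p.Prime] (k : ℕ) (hk : 1 ≤ k) :
    ∑ x : ZMod p, x ^ k = if (p - 1) ∣ k then -1 else 0 := by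
  classical
  let φ : (ZMod p)ˣ ↪ ZMod p := ⟨fun x ↦ x, fun _ _ h => Units.ext h⟩
  have hmap : univ.map φ = univ \ {0} := by
    ext x
    simp only [mem_map, mem_univ, Function.Embedding.coeFn_mk, true_and, mem_sdiff,
      mem_singleton, φ]
    exact isUnit_iff_ne_zero
  calc
    ∑ x : ZMod p, x ^ k = ∑ x ∈ univ \ {(0 : ZMod p)}, x ^ k := by
      rw [← sum_sdiff ({0} : Finset (ZMod p)).subset_univ, sum_singleton,
        zero_pow (by omega), add_zero]
    _ = ∑ x : (ZMod p)ˣ, (x ^ k : ZMod p) := by simp [φ, ← hmap, univ.sum_map φ]; rfl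
    _ = if (p - 1) ∣ k then -1 else 0 := by
      rw [FiniteField.sum_pow_units, ZMod.card]

lemma aux_neg_one_pow {R : Type*} [Ring R] (a b : ℕ) (h : a % 2 = b % 2) :
    (-1 : R) ^ a = (-1) ^ b := by
  conv_lhs => rw [← Nat.div_add_mod a 2]
  conv_rhs => rw [← Nat.div_add_mod b 2]
  rw [pow_add, pow_add, pow_mul, pow_mul, neg_one_sq, one_pow, one_pow, h]

lemma aux_range_sum (p : ℕ) [NeZero p] (f : ZMod p → ZMod p) :
    ∑ b ∈ Finset.range p, f (b : ZMod p) = ∑ x : ZMod p, f x := by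
  have himg : (Finset.range p).image (Nat.cast : ℕ → ZMod p) = Finset.univ := by
    ext x
    simp only [Finset.mem_image, Finset.mem_range, Finset.mem_univ, iff_true]
    exact ⟨x.val, ZMod.val_lt x, ZMod.natCast_rightInverse x⟩
  rw [← himg, Finset.sum_image]
  intro a ha b hb hab
  rw [← ZMod.val_cast_of_lt (Finset.mem_range.mp ha), ← ZMod.val_cast_of_lt (Finset.mem_range.mp hb), hab]

theorem sum_over_b_identity (p : ℕ) (hp : p.Prime) (hodd : Odd p) (lam : ZMod p)
    (s t : ℕ) (hs1 : 1 ≤ s) (hs2 : s ≤ p - 2) (ht1 : 1 ≤ t) (ht2 : t ≤ p - 2) :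
    ∑ b ∈ Finset.Icc 1 (p - 1), (lam - (b : ZMod p)) ^ s * (b : ZMod p) ^ t =
      if s + t < p - 1 then 0
      else (-1) ^ (t + 1) * (Nat.choose s (p - 1 - t) : ZMod p) * lam ^ (s + t - (p - 1)) := by
  classical
  haveI : Fact p.Prime := ⟨hp⟩
  have hp2 : p ≠ 2 := by rintro rfl; exact (by decide : ¬ Odd 2) hodd
  have hp3 : 3 ≤ p := by have := hp.two_le; omega
  -- step 1: extend to range p
  have hins : Finset.range p = insert 0 (Finset.Icc 1 (p - 1)) := by
    ext b; simp [Finset.mem_range, Finset.mem_Icc]; omega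
  have h1 : ∑ b ∈ Finset.Icc 1 (p - 1), (lam - (b : ZMod p)) ^ s * (b : ZMod p) ^ t
      = ∑ b ∈ Finset.range p, (lam - (b : ZMod p)) ^ s * (b : ZMod p) ^ t := by
    rw [hins, Finset.sum_insert (by simp)]
    simp [zero_pow (show t ≠ 0 by omega)]
  rw [h1, aux_range_sum p (fun x => (lam - x) ^ s * x ^ t)]
  -- step 2: expand binomial and swap sums
  have h2 : ∑ x : ZMod p, (lam - x) ^ s * x ^ t
      = ∑ m ∈ Finset.range (s + 1), (-1 : ZMod p) ^ (m + s) * lam ^ m * (s.choose m : ZMod p)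
          * (if s - m + t = p - 1 then (-1 : ZMod p) else 0) := by
    have expand : ∀ x : ZMod p, (lam - x) ^ s * x ^ t
        = ∑ m ∈ Finset.range (s + 1),
            (-1 : ZMod p) ^ (m + s) * lam ^ m * (s.choose m : ZMod p) * x ^ (s - m + t) := by
      intro x
      rw [sub_pow, Finset.sum_mul]
      apply Finset.sum_congr rfl
      intro m hm
      rw [pow_add]
      ring
    simp_rw [expand]
    rw [Finset.sum_comm]
    apply Finset.sum_congr rfl
    intro m hm
    rw [← Finset.mul_sum, aux_sum_pow p (s - m + t) (by omega)]
    congr 1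
    have hm' : m ≤ s := by simpa using Nat.lt_succ_iff.mp (Finset.mem_range.mp hm)
    congr 1
    apply propext
    constructor
    · rintro ⟨c, hc⟩
      have hc0 : c ≠ 0 := by rintro rfl; omega
      have hc2 : c < 2 := by
        by_contra h'
        push_neg at h'
        have := Nat.mul_le_mul_left (p - 1) h'
        omega
      have : c = 1 := by omega
      subst this
      omega
    · intro h; exact ⟨1, by omega⟩
  rw [h2]
  by_cases hcase : s + t < p - 1
  · rw [if_pos hcase]
    apply Finset.sum_eq_zero
    intro m hm
    rw [if_neg (by omega), mul_zero]
  · rw [if_neg hcase]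
    push_neg at hcase
    have hm0s : s + t - (p - 1) ≤ s := by omega
    rw [Finset.sum_eq_single (s + t - (p - 1))]
    · rw [if_pos (by omega)]
      have hch : s.choose (s + t - (p - 1)) = s.choose (p - 1 - t) := by
        rw [← Nat.choose_symm hm0s]
        congr 1
        omega
      rw [hch]
      have hsign : (-1 : ZMod p) ^ ((s + t - (p - 1)) + s) * -1 = (-1 : ZMod p) ^ (t + 1) := by
        rw [show ((-1 : ZMod p) ^ ((s + t - (p - 1)) + s) * -1) = (-1 : ZMod p) ^ ((s + t - (p - 1)) + s + 1) by rw [pow_succ]]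
        apply aux_neg_one_pow
        obtain ⟨k, hk⟩ := hodd
        have hpe : (p - 1) % 2 = 0 := by omega
        omega
      calc (-1 : ZMod p) ^ ((s + t - (p - 1)) + s) * lam ^ (s + t - (p - 1)) * (s.choose (p-1-t) : ZMod p) * -1
          = ((-1 : ZMod p) ^ ((s + t - (p - 1)) + s) * -1) * (s.choose (p-1-t) : ZMod p) * lam ^ (s + t - (p - 1)) := by ring
        _ = (-1 : ZMod p) ^ (t + 1) * (s.choose (p-1-t) : ZMod p) * lam ^ (s + t - (p - 1)) := by rw [hsign]
    · intro m hm hne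
      have hm' : m ≤ s := Nat.lt_succ_iff.mp (Finset.mem_range.mp hm)
      rw [if_neg (by omega), mul_zero]
    · intro h
      exact absurd (Finset.mem_range.mpr (by omega)) h
end

section
/- Let p be a prime and let l, m be natural numbers with 1 ≤ l ≤ m. Then v_p(binom(m, l)) ≤ ⌊log_p m⌋ - v_p(l), where v_p denotes the p-adic valuation of a natural number and ⌊log_p m⌋ = Nat.log p m. Equivalently, padicValNat p (Nat.choose m l) + padicValNat p l ≤ Nat.log p m. -/
/-! By Kummer's theorem `v_p (m.choose l)` counts the carries at positions `1, …, ⌊log_p m⌋` when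
`l` and `m - l` are added in base `p`. The lowest `v_p(l)` digits of `l` are zero, so no carry
occurs at the positions `i ≤ v_p(l)`. -/

open Finset

theorem not_pow_le_mod_add_mod_of_le_padicValNat {p l i : ℕ} (n : ℕ) (hp : p ≠ 0)
    (hi : i ≤ padicValNat p l) : ¬ p ^ i ≤ l % p ^ i + n % p ^ i := by
  have hl : l % p ^ i = 0 :=
    Nat.mod_eq_zero_of_dvd ((pow_dvd_pow p hi).trans pow_padicValNat_dvd)
  have hn : n % p ^ i < p ^ i := Nat.mod_lt n (pow_pos (Nat.pos_of_ne_zero hp) i)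
  omega

theorem card_carries_le_sub_padicValNat {p l n : ℕ} (b : ℕ) (hp : p ≠ 0) :
    #{i ∈ Ico 1 b | p ^ i ≤ l % p ^ i + n % p ^ i} ≤ b - (padicValNat p l + 1) := by
  have hsub : {i ∈ Ico 1 b | p ^ i ≤ l % p ^ i + n % p ^ i} ⊆ Ico (padicValNat p l + 1) b := by
    intro i hi
    simp only [mem_filter, mem_Ico] at hi ⊢
    refine ⟨?_, hi.1.2⟩
    by_contra! hiv
    exact not_pow_le_mod_add_mod_of_le_padicValNat n hp (Nat.lt_succ_iff.mp hiv) hi.2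
  simpa only [Nat.card_Ico] using card_le_card hsub

theorem padicValNat_choose_le_general (p : ℕ) (hp : p.Prime) (l m : ℕ) (hlm : l ≤ m) :
    padicValNat p (Nat.choose m l) + padicValNat p l ≤ Nat.log p m := by
  have : Fact p.Prime := ⟨hp⟩
  have hv : padicValNat p l ≤ Nat.log p m :=
    (padicValNat_le_nat_log l).trans (Nat.log_mono_right hlm)
  have hcarries := card_carries_le_sub_padicValNat (l := l) (n := m - l) (Nat.log p m + 1)
    hp.ne_zero
  rw [padicValNat_choose hlm (lt_add_one _)]
  omega

theorem padicValNat_choose_le (p : ℕ) (hp : p.Prime) (l m : ℕ) (hl : 1 ≤ l) (hlm : l ≤ m) :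
    padicValNat p (Nat.choose m l) + padicValNat p l ≤ Nat.log p m :=
  padicValNat_choose_le_general p hp l m hlm
end

section
/- For every natural number n ≥ 1, ∑_{l=2}^{n} (-1)^l · binom(n, l) / (l - 1) = n · (H_n - 1), where H_n is the n-th harmonic number (the sum being empty, hence 0, when n = 1). -/
def H (n : ℕ) : ℚ := ∑ i ∈ Finset.Icc 1 n, (1 : ℚ) / i

lemma mySum_Icc_eq_sum_range (f : ℕ → ℚ) (m n : ℕ) :
    ∑ i ∈ Finset.Icc m n, f i = ∑ i ∈ Finset.range (n + 1 - m), f (m + i) := by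
  rw [← Finset.Ico_add_one_right_eq_Icc, Finset.sum_Ico_eq_sum_range]

lemma alt_sum (n : ℕ) (hn : n ≠ 0) :
    ∑ k ∈ Finset.Icc 1 n, (-1 : ℚ) ^ (k + 1) * (n.choose k : ℚ) = 1 := by
  have h := Int.alternating_sum_range_choose_of_ne hn
  have hq : ∑ i ∈ Finset.range (n + 1), (-1 : ℚ) ^ i * (n.choose i : ℚ) = 0 := by
    exact_mod_cast congrArg (Int.cast : ℤ → ℚ) h
  rw [Finset.sum_range_succ'] at hq
  have hIcc : ∑ k ∈ Finset.Icc 1 n, (-1 : ℚ) ^ (k + 1) * (n.choose k : ℚ)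
      = ∑ i ∈ Finset.range n, (-1 : ℚ) ^ (1 + i + 1) * (n.choose (1 + i) : ℚ) := by
    rw [mySum_Icc_eq_sum_range]
    simp
  rw [hIcc]
  have he : ∀ i ∈ Finset.range n,
      (-1 : ℚ) ^ (1 + i + 1) * (n.choose (1 + i) : ℚ)
        = -((-1 : ℚ) ^ (i + 1) * (n.choose (i + 1) : ℚ)) := by
    intro i _
    rw [add_comm 1 i]
    ring
  rw [Finset.sum_congr rfl he, Finset.sum_neg_distrib]
  simp at hq
  linarith [hq]

lemma harmonic_identity (n : ℕ) :
    ∑ k ∈ Finset.Icc 1 n, (-1 : ℚ) ^ (k + 1) * (n.choose k : ℚ) / k = H n := by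
  induction n with
  | zero => simp [H]
  | succ n ih =>
    have key : ∀ j : ℕ, ((j : ℚ) + 1) * ((n + 1).choose (j + 1) : ℚ)
        = ((n : ℚ) + 1) * (n.choose j : ℚ) := by
      intro j
      have hq : ((n + 1) * n.choose j : ℕ) = ((n + 1).choose (j + 1) * (j + 1) : ℕ) :=
        Nat.add_one_mul_choose_eq n j
      have hq' : ((n : ℚ) + 1) * (n.choose j : ℚ)
          = ((n + 1).choose (j + 1) : ℚ) * ((j : ℚ) + 1) := by exact_mod_cast hq
      linear_combination -hq'
    rw [mySum_Icc_eq_sum_range]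
    simp only [Nat.add_sub_cancel]
    have split : ∀ i ∈ Finset.range (n + 1),
        (-1 : ℚ) ^ (1 + i + 1) * ((n + 1).choose (1 + i) : ℚ) / (1 + i : ℕ)
          = (-1 : ℚ) ^ (i + 1 + 1) * (n.choose (i + 1) : ℚ) / ((i : ℚ) + 1)
            + (-1 : ℚ) ^ i * (n.choose i : ℚ) / ((i : ℚ) + 1) := by
      intro i _
      rw [add_comm 1 i, Nat.choose_succ_succ]
      push_cast
      ring
    rw [Finset.sum_congr rfl split, Finset.sum_add_distrib]
    have part1 : ∑ i ∈ Finset.range (n + 1),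
        (-1 : ℚ) ^ (i + 1 + 1) * (n.choose (i + 1) : ℚ) / ((i : ℚ) + 1) = H n := by
      rw [← ih, mySum_Icc_eq_sum_range]
      simp only [Nat.add_sub_cancel]
      rw [Finset.sum_range_succ]
      have hz : (n.choose (n + 1) : ℚ) = 0 := by
        simp [Nat.choose_eq_zero_of_lt]
      rw [hz]
      simp only [mul_zero, zero_mul, zero_div, add_zero]
      apply Finset.sum_congr rfl
      intro i _
      rw [add_comm 1 i]
      push_cast
      ring
    have part2 : ∑ i ∈ Finset.range (n + 1),
        (-1 : ℚ) ^ i * (n.choose i : ℚ) / ((i : ℚ) + 1) = 1 / ((n : ℚ) + 1) := by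
      have e : ∀ i ∈ Finset.range (n + 1),
          (-1 : ℚ) ^ i * (n.choose i : ℚ) / ((i : ℚ) + 1)
            = (-1 : ℚ) ^ (i + 1 + 1) * ((n + 1).choose (i + 1) : ℚ) / ((n : ℚ) + 1) := by
        intro i _
        have hk := key i
        have h1 : ((i : ℚ) + 1) ≠ 0 := by positivity
        have h2 : ((n : ℚ) + 1) ≠ 0 := by positivity
        field_simp
        linear_combination (-(-1 : ℚ) ^ i) * hk
      rw [Finset.sum_congr rfl e, ← Finset.sum_div]
      have hs : ∑ i ∈ Finset.range (n + 1),
          (-1 : ℚ) ^ (i + 1 + 1) * ((n + 1).choose (i + 1) : ℚ)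
          = ∑ k ∈ Finset.Icc 1 (n + 1), (-1 : ℚ) ^ (k + 1) * ((n + 1).choose k : ℚ) := by
        rw [mySum_Icc_eq_sum_range]
        simp only [Nat.add_sub_cancel]
        apply Finset.sum_congr rfl
        intro i _
        rw [add_comm 1 i]
      rw [hs, alt_sum (n + 1) (Nat.succ_ne_zero n)]
    rw [part1, part2]
    have hH : H (n + 1) = H n + 1 / ((n : ℚ) + 1) := by
      unfold H
      rw [Finset.sum_Icc_succ_top (by omega : 1 ≤ n + 1)]
      push_cast
      ring
    rw [hH]

theorem alt_binom_div_pred (n : ℕ) (hn : 1 ≤ n) :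
    ∑ l ∈ Finset.Icc 2 n, (-1 : ℚ) ^ l * (Nat.choose n l : ℚ) / ((l : ℚ) - 1) =
      (n : ℚ) * (H n - 1) := by
  induction n with
  | zero => omega
  | succ n ih =>
    rcases Nat.eq_or_lt_of_le hn with h1 | h1
    · have : n = 0 := by omega
      subst this
      simp [H]
    · have hn' : 1 ≤ n := by omega
      have ihn := ih hn'
      obtain ⟨m, rfl⟩ : ∃ m, n = m + 1 := ⟨n - 1, by omega⟩
      rw [mySum_Icc_eq_sum_range]
      have hcard : m + 1 + 1 + 1 - 2 = m + 1 := by omega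
      rw [hcard]
      have split : ∀ i ∈ Finset.range (m + 1),
          (-1 : ℚ) ^ (2 + i) * ((m + 1 + 1).choose (2 + i) : ℚ) / ((2 + i : ℕ) - 1 : ℚ)
            = (-1 : ℚ) ^ (2 + i) * ((m + 1).choose (2 + i) : ℚ) / ((2 + i : ℕ) - 1 : ℚ)
              + (-1 : ℚ) ^ (i + 1 + 1) * ((m + 1).choose (i + 1) : ℚ) / ((i : ℚ) + 1) := by
        intro i _
        have h2i : (2 + i) = (1 + i) + 1 := by omega
        rw [h2i, Nat.choose_succ_succ]
        push_cast
        rw [add_comm 1 i]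
        ring
      rw [Finset.sum_congr rfl split, Finset.sum_add_distrib]
      have partA : ∑ i ∈ Finset.range (m + 1),
          (-1 : ℚ) ^ (2 + i) * ((m + 1).choose (2 + i) : ℚ) / ((2 + i : ℕ) - 1 : ℚ)
            = ((m : ℚ) + 1) * (H (m + 1) - 1) := by
        have : ((m + 1 : ℕ) : ℚ) * (H (m + 1) - 1) = ((m : ℚ) + 1) * (H (m + 1) - 1) := by
          push_cast; ring
        rw [← this, ← ihn, mySum_Icc_eq_sum_range]
        have hc : m + 1 + 1 - 2 = m := by omega
        rw [hc, Finset.sum_range_succ]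
        have hz : ((m + 1).choose (2 + m) : ℚ) = 0 := by
          have : 2 + m = (m + 1) + 1 := by omega
          rw [this]
          simp [Nat.choose_eq_zero_of_lt]
        rw [hz]
        simp
      have partB : ∑ i ∈ Finset.range (m + 1),
          (-1 : ℚ) ^ (i + 1 + 1) * ((m + 1).choose (i + 1) : ℚ) / ((i : ℚ) + 1)
            = H (m + 1) := by
        rw [← harmonic_identity (m + 1), mySum_Icc_eq_sum_range]
        simp only [Nat.add_sub_cancel]
        apply Finset.sum_congr rfl
        intro i _
        rw [add_comm 1 i]
        push_cast
        ring
      rw [partA, partB]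
      have hH : H (m + 1 + 1) = H (m + 1) + 1 / ((m : ℚ) + 2) := by
        unfold H
        rw [Finset.sum_Icc_succ_top (by omega : 1 ≤ m + 1 + 1)]
        push_cast
        ring
      rw [hH]
      have h2 : ((m : ℚ) + 2) ≠ 0 := by positivity
      push_cast
      field_simp
      ring
end

section
/- Let r, n, l be natural numbers with n ≤ r, 2n > r (i.e. n > r/2), r - n + 1 ≤ l, and l ≤ n - 1. Then, in ℚ, ∑_{j=1}^{l} (-1)^j · (j / (n - j)) · binom(n, j) · binom(r - j, r - l) = (-1)^l · (r-n)! · n · (n-l-1)! / (r-l)!. -/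
open Finset Polynomial

lemma aux_inv : ∀ (l n : ℕ), l < n →
    ∑ j ∈ Finset.range (l+1), (-1:ℚ)^j * (l.choose j) / ((n:ℚ) - j)
      = (-1:ℚ)^l * (Nat.factorial l) * (Nat.factorial (n - l - 1)) / (Nat.factorial n) := by
  intro l
  induction l with
  | zero =>
    intro n hn
    obtain ⟨k, rfl⟩ : ∃ k, n = k + 1 := ⟨n - 1, by omega⟩
    rw [Finset.sum_range_one]
    simp only [pow_zero, Nat.choose_zero_right, Nat.cast_one,
      Nat.factorial_zero, Nat.add_sub_cancel, Nat.factorial_succ]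
    push_cast
    have hk : ((k:ℚ)+1) ≠ 0 := by positivity
    have hk2 : ((k:ℚ)+1) * (k.factorial:ℚ) ≠ 0 := by
      have : (k.factorial:ℚ) ≠ 0 := Nat.cast_ne_zero.mpr (Nat.factorial_ne_zero _)
      positivity
    field_simp
    ring
  | succ l ih =>
    intro n hn
    obtain ⟨k, rfl⟩ : ∃ k, n = l + 2 + k := ⟨n - l - 2, by omega⟩
    have hsub1 : l + 2 + k - (l + 1) - 1 = k := by omega
    have hsub2 : l + 1 + k - l - 1 = k := by omega
    have hsub3 : l + 2 + k - l - 1 = k + 1 := by omega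
    rw [Finset.sum_range_succ']
    simp only [Nat.choose_succ_succ, hsub1]
    push_cast
    have h1 : ∀ i ∈ Finset.range (l+1),
        (-1:ℚ)^(i+1) * ((l.choose i : ℚ) + (l.choose (i+1) : ℚ)) / ((l:ℚ)+2+(k:ℚ) - ((i:ℚ)+1))
        = -((-1:ℚ)^i * (l.choose i) / (((l:ℚ)+1+(k:ℚ)) - i))
          - (-1:ℚ)^i * (l.choose (i+1)) / ((l:ℚ)+2+(k:ℚ) - ((i:ℚ)+1)) := by
      intro i hi
      have : (l:ℚ)+2+(k:ℚ) - ((i:ℚ)+1) = ((l:ℚ)+1+(k:ℚ)) - i := by ring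
      rw [this]
      ring
    rw [Finset.sum_congr rfl h1, Finset.sum_sub_distrib]
    have hA := ih (l+1+k) (by omega)
    rw [hsub2] at hA
    push_cast at hA
    rw [Finset.sum_neg_distrib, hA]
    -- second sum
    set g : ℕ → ℚ := fun j => (-1:ℚ)^j * (l.choose j) / ((l:ℚ)+2+(k:ℚ)-j) with hg
    have e1 := Finset.sum_range_succ' g (l+1)
    have e2 := Finset.sum_range_succ g (l+1)
    have hIHn := ih (l+2+k) (by omega)
    rw [hsub3] at hIHn
    push_cast at hIHn
    have e3 : ∑ j ∈ Finset.range (l+1), g j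
        = (-1:ℚ)^l * (Nat.factorial l) * (Nat.factorial (k+1)) / (Nat.factorial (l+2+k)) := by
      rw [hg]; exact hIHn
    have hlast : g (l+1) = 0 := by
      simp [hg, Nat.choose_succ_self]
    have hB : ∑ i ∈ Finset.range (l+1),
        (-1:ℚ)^i * (l.choose (i+1)) / ((l:ℚ)+2+(k:ℚ) - ((i:ℚ)+1))
        = -(∑ j ∈ Finset.range (l+1), g j) + g 0 := by
      have : ∑ i ∈ Finset.range (l+1), g (i+1)
          = ∑ j ∈ Finset.range (l+1), g j + g (l+1) - g 0 := by
        rw [← e2, e1]; ring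
      rw [hlast] at this
      have h4 : ∀ i ∈ Finset.range (l+1),
          (-1:ℚ)^i * (l.choose (i+1)) / ((l:ℚ)+2+(k:ℚ) - ((i:ℚ)+1)) = -(g (i+1)) := by
        intro i hi
        simp only [hg]
        push_cast
        ring
      rw [Finset.sum_congr rfl h4, Finset.sum_neg_distrib, this]
      ring
    rw [hB, e3]
    have hg0 : g 0 = 1 / ((l:ℚ)+2+(k:ℚ)) := by simp [hg]
    rw [hg0]
    have hf1 : ((l+2+k).factorial : ℚ) = ((l:ℚ)+2+k) * ((l+1+k).factorial : ℚ) := by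
      rw [show l+2+k = (l+1+k)+1 by omega, Nat.factorial_succ]; push_cast; ring
    have hf2 : ((k+1).factorial : ℚ) = ((k:ℚ)+1) * (k.factorial : ℚ) := by
      rw [Nat.factorial_succ]; push_cast; ring
    have hf3 : ((l+1).factorial : ℚ) = ((l:ℚ)+1) * (l.factorial : ℚ) := by
      rw [Nat.factorial_succ]; push_cast; ring
    rw [hf1, hf2, hf3]
    have hne1 : ((l+1+k).factorial : ℚ) ≠ 0 := Nat.cast_ne_zero.mpr (Nat.factorial_ne_zero _)
    have hne2 : (k.factorial : ℚ) ≠ 0 := Nat.cast_ne_zero.mpr (Nat.factorial_ne_zero _)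
    have hne3 : ((l:ℚ)+2+k) ≠ 0 := by positivity
    field_simp
    simp only [Nat.choose_zero_right, Nat.cast_one]
    ring


lemma aux_poly : ∀ (l : ℕ) (q : Polynomial ℚ), q.degree < (l : WithBot ℕ) →
    ∑ j ∈ Finset.range (l+1), (-1:ℚ)^j * (l.choose j) * q.eval (j : ℚ) = 0 := by
  intro l
  induction l with
  | zero =>
    intro q hq
    have hq0 : q = 0 := by
      rw [← Polynomial.degree_eq_bot]
      exact Nat.WithBot.lt_zero_iff.mp (by exact_mod_cast hq)
    simp [hq0]
  | succ l ih =>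
    intro q hq
    set q' : Polynomial ℚ := q - q.comp (X + C 1) with hq'
    have heval : ∀ x : ℚ, q'.eval x = q.eval x - q.eval (x + 1) := by
      intro x
      simp [hq', Polynomial.eval_comp]
    have hdeg : q'.degree < (l : WithBot ℕ) := by
      by_cases h0 : q' = 0
      · rw [h0, Polynomial.degree_zero]; exact WithBot.bot_lt_coe l
      · have hqne : q ≠ 0 := by
          intro h; apply h0; simp [hq', h]
        have hlc : (q.comp (X + C 1)).leadingCoeff = q.leadingCoeff := by
          rw [Polynomial.leadingCoeff_comp (by rw [Polynomial.natDegree_X_add_C]; exact one_ne_zero)]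
          rw [Polynomial.leadingCoeff_X_add_C, one_pow, mul_one]
        have hcne : q.comp (X + C 1) ≠ 0 := by
          intro h
          apply hqne
          rw [← Polynomial.leadingCoeff_eq_zero, ← hlc, h, Polynomial.leadingCoeff_zero]
        have hnd : (q.comp (X + C 1)).natDegree = q.natDegree := by
          rw [← Polynomial.taylor_apply, Polynomial.natDegree_taylor]
        have hdc : q.degree = (q.comp (X + C 1)).degree := by
          rw [Polynomial.degree_eq_natDegree hqne, Polynomial.degree_eq_natDegree hcne, hnd]
        have hlt : q'.degree < q.degree := Polynomial.degree_sub_lt hdc hqne hlc.symm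
        have hle : q.degree ≤ (l : WithBot ℕ) := by
          rw [Polynomial.degree_eq_natDegree hqne] at hq ⊢
          exact_mod_cast Nat.lt_succ_iff.mp (by exact_mod_cast hq)
        exact lt_of_lt_of_le hlt hle
    have key := ih q' hdeg
    -- Now express the (l+1) sum in terms of the l sum of q'.
    rw [Finset.sum_range_succ']
    simp only [Nat.choose_succ_succ]
    push_cast
    have h1 : ∀ i ∈ Finset.range (l+1),
        (-1:ℚ)^(i+1) * ((l.choose i : ℚ) + (l.choose (i+1) : ℚ)) * q.eval ((i:ℚ)+1)
        = -((-1:ℚ)^i * (l.choose i) * q.eval ((i:ℚ)+1))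
          - (-1:ℚ)^i * (l.choose (i+1)) * q.eval ((i:ℚ)+1) := by
      intro i hi; ring
    rw [Finset.sum_congr rfl h1, Finset.sum_sub_distrib]
    set g : ℕ → ℚ := fun j => (-1:ℚ)^j * (l.choose j) * q.eval (j:ℚ) with hg
    have e1 := Finset.sum_range_succ' g (l+1)
    have e2 := Finset.sum_range_succ g (l+1)
    have hlast : g (l+1) = 0 := by simp [hg, Nat.choose_succ_self]
    have hB : ∑ i ∈ Finset.range (l+1),
        (-1:ℚ)^i * (l.choose (i+1)) * q.eval ((i:ℚ)+1)
        = -(∑ j ∈ Finset.range (l+1), g j) + g 0 := by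
      have h5 : ∑ i ∈ Finset.range (l+1), g (i+1)
          = ∑ j ∈ Finset.range (l+1), g j + g (l+1) - g 0 := by
        rw [← e2, e1]; ring
      rw [hlast] at h5
      have h4 : ∀ i ∈ Finset.range (l+1),
          (-1:ℚ)^i * (l.choose (i+1)) * q.eval ((i:ℚ)+1) = -(g (i+1)) := by
        intro i hi
        simp only [hg]
        push_cast
        ring
      rw [Finset.sum_congr rfl h4, Finset.sum_neg_distrib, h5]
      ring
    rw [hB]
    have hA : ∑ i ∈ Finset.range (l+1), (-1:ℚ)^i * (l.choose i) * q.eval ((i:ℚ)+1)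
        = ∑ j ∈ Finset.range (l+1), g j - ∑ j ∈ Finset.range (l+1),
            (-1:ℚ)^j * (l.choose j) * q'.eval (j:ℚ) := by
      rw [← Finset.sum_sub_distrib]
      apply Finset.sum_congr rfl
      intro i hi
      rw [heval]
      simp only [hg]
      ring
    rw [Finset.sum_neg_distrib, hA, key]
    have hg0 : g 0 = q.eval 0 := by simp [hg]
    rw [hg0]
    simp

lemma aux_fact_prod : ∀ (m a : ℕ),
    (Nat.factorial a) * ∏ i ∈ Finset.range m, (a + i + 1) = Nat.factorial (a + m) := by
  intro m
  induction m with
  | zero => intro a; simp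
  | succ m ih =>
    intro a
    rw [Finset.prod_range_succ, ← mul_assoc, ih, show a + (m+1) = (a+m)+1 by omega,
      Nat.factorial_succ]
    ring

theorem c_n_l_closed_form (r n l : ℕ) (hnr : n ≤ r) (hn : r < 2 * n)
    (hl1 : r - n + 1 ≤ l) (hl2 : l ≤ n - 1) :
    ∑ j ∈ Finset.Icc 1 l,
        (-1 : ℚ) ^ j * ((j : ℚ) / ((n : ℚ) - (j : ℚ))) * (Nat.choose n j : ℚ) *
          (Nat.choose (r - j) (r - l) : ℚ) =
      (-1 : ℚ) ^ l * (Nat.factorial (r - n) : ℚ) * (n : ℚ) *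
          (Nat.factorial (n - l - 1) : ℚ) / (Nat.factorial (r - l) : ℚ) := by
  obtain ⟨m, rfl⟩ : ∃ m, r = n + m := ⟨r - n, by omega⟩
  have hn1 : 1 ≤ n := by omega
  have hml : m < l := by omega
  have hln : l < n := by omega
  rw [show n + m - n = m by omega]
  -- the polynomial P and its quotient q
  set P : Polynomial ℚ := X * ∏ i ∈ Finset.range m, (C ((n:ℚ) + i + 1) - X) with hP
  have hP0 : P.eval 0 = 0 := by simp [hP]
  have hPn : P.eval (n:ℚ) = (n:ℚ) * (Nat.factorial m : ℚ) := by
    simp only [hP, Polynomial.eval_mul, Polynomial.eval_X, Polynomial.eval_prod,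
      Polynomial.eval_sub, Polynomial.eval_C]
    congr 1
    calc ∏ i ∈ Finset.range m, ((n:ℚ) + (i:ℚ) + 1 - (n:ℚ))
        = ∏ i ∈ Finset.range m, (((i+1 : ℕ)):ℚ) := by
          apply Finset.prod_congr rfl; intro i hi; push_cast; ring
      _ = (Nat.factorial m : ℚ) := by
          rw [← Nat.cast_prod, Finset.prod_range_add_one_eq_factorial]
  have hdvd : (X - C (n:ℚ)) ∣ (P - C (P.eval (n:ℚ))) := by
    rw [Polynomial.dvd_iff_isRoot]
    simp [Polynomial.IsRoot]
  obtain ⟨q, hq⟩ := hdvd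
  have hqe : ∀ x : ℚ, P.eval x - P.eval (n:ℚ) = (x - (n:ℚ)) * q.eval x := by
    intro x
    have := congrArg (Polynomial.eval x) hq
    simpa using this
  have hnne : (n:ℚ) ≠ 0 := by positivity
  have hq0 : q.eval 0 = (Nat.factorial m : ℚ) := by
    have h := hqe 0
    rw [hP0, hPn] at h
    field_simp at h
    exact mul_left_cancel₀ hnne (by linear_combination h)
  -- degree bound for q
  have hqne : q ≠ 0 := by
    intro h
    rw [h, mul_zero, sub_eq_zero] at hq
    have := congrArg (Polynomial.eval 0) hq
    rw [hP0, Polynomial.eval_C, hPn] at this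
    have hmf : (Nat.factorial m : ℚ) ≠ 0 := Nat.cast_ne_zero.mpr (Nat.factorial_ne_zero _)
    exact (mul_ne_zero hnne hmf) this.symm
  have hdegP : P.degree ≤ ((m + 1 : ℕ) : WithBot ℕ) := by
    rw [hP]
    calc (X * ∏ i ∈ Finset.range m, (C ((n:ℚ) + i + 1) - X)).degree
        = (X : Polynomial ℚ).degree + (∏ i ∈ Finset.range m, (C ((n:ℚ) + i + 1) - X)).degree :=
          Polynomial.degree_mul
      _ ≤ 1 + (m : WithBot ℕ) := by
          apply add_le_add
          · exact le_of_eq Polynomial.degree_X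
          · apply le_trans (Polynomial.degree_prod_le _ _)
            calc ∑ i ∈ Finset.range m, (C ((n:ℚ) + i + 1) - X).degree
                ≤ ∑ _i ∈ Finset.range m, (1 : WithBot ℕ) := by
                  apply Finset.sum_le_sum
                  intro i hi
                  rw [show C ((n:ℚ) + i + 1) - X = -(X - C ((n:ℚ) + i + 1)) from
                    (neg_sub _ _).symm, Polynomial.degree_neg, Polynomial.degree_X_sub_C]
              _ = (m : WithBot ℕ) := by
                  rw [Finset.sum_const, Finset.card_range]
                  simp [Nat.smul_one_eq_cast]
      _ = ((m + 1 : ℕ) : WithBot ℕ) := by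
          push_cast
          exact (add_comm _ _)
  have hdegq : q.degree < (l : WithBot ℕ) := by
    have h1 : ((X - C (n:ℚ)) * q).degree ≤ ((m + 1 : ℕ) : WithBot ℕ) := by
      rw [← hq]
      apply le_trans (Polynomial.degree_sub_le _ _)
      apply max_le hdegP
      apply le_trans Polynomial.degree_C_le
      exact_mod_cast WithBot.coe_le_coe.mpr (Nat.zero_le _)
    rw [Polynomial.degree_mul, Polynomial.degree_X_sub_C,
      Polynomial.degree_eq_natDegree hqne] at h1
    have h2 : (1 : WithBot ℕ) + (q.natDegree : WithBot ℕ) = ((1 + q.natDegree : ℕ) : WithBot ℕ) := by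
      push_cast; rfl
    rw [h2] at h1
    have h3 : 1 + q.natDegree ≤ m + 1 := by exact_mod_cast h1
    rw [Polynomial.degree_eq_natDegree hqne]
    exact_mod_cast WithBot.coe_lt_coe.mpr (by omega)
  -- the constant c
  set c : ℚ := (Nat.factorial n : ℚ) / ((Nat.factorial l : ℚ) * (Nat.factorial (n+m-l) : ℚ))
    with hc
  -- pointwise identity
  have hpt : ∀ j ∈ Finset.Icc 1 l,
      (-1 : ℚ) ^ j * ((j : ℚ) / ((n : ℚ) - (j : ℚ))) * (Nat.choose n j : ℚ) *
          (Nat.choose (n + m - j) (n + m - l) : ℚ)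
        = (-1:ℚ)^j * (l.choose j) * (-(q.eval (j:ℚ))) * c
          + ((n:ℚ) * (Nat.factorial m : ℚ) * c) * ((-1:ℚ)^j * (l.choose j) / ((n:ℚ) - j)) := by
    intro j hj
    rw [Finset.mem_Icc] at hj
    obtain ⟨hj1, hj2⟩ := hj
    have hjn : j < n := lt_of_le_of_lt hj2 hln
    have hnj : ((n:ℚ) - j) ≠ 0 := by
      have : (j:ℚ) < n := by exact_mod_cast hjn
      intro h; nlinarith
    have hjnq : ((j:ℚ) - n) ≠ 0 := fun h => hnj (by linarith [sub_eq_zero.mp h])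
    -- cast the binomials
    have hc1 : (Nat.choose n j : ℚ)
        = (Nat.factorial n : ℚ) / ((Nat.factorial j : ℚ) * (Nat.factorial (n-j) : ℚ)) := by
      rw [Nat.cast_choose ℚ (le_of_lt hjn)]
    have hc2 : (Nat.choose (n+m-j) (n+m-l) : ℚ)
        = (Nat.factorial (n+m-j) : ℚ) /
          ((Nat.factorial (n+m-l) : ℚ) * (Nat.factorial (l-j) : ℚ)) := by
      rw [Nat.cast_choose ℚ (by omega : n+m-l ≤ n+m-j), show n+m-j - (n+m-l) = l - j by omega]
    have hc3 : (Nat.choose l j : ℚ)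
        = (Nat.factorial l : ℚ) / ((Nat.factorial j : ℚ) * (Nat.factorial (l-j) : ℚ)) := by
      rw [Nat.cast_choose ℚ hj2]
    -- evaluate P at j
    have hPj : ((Nat.factorial (n-j) : ℚ)) * P.eval (j:ℚ)
        = (j:ℚ) * (Nat.factorial (n+m-j) : ℚ) := by
      simp only [hP, Polynomial.eval_mul, Polynomial.eval_X, Polynomial.eval_prod,
        Polynomial.eval_sub, Polynomial.eval_C]
      have hfac : ∏ i ∈ Finset.range m, ((n:ℚ) + (i:ℚ) + 1 - (j:ℚ))
          = ∏ i ∈ Finset.range m, (((n - j + i + 1 : ℕ)) : ℚ) := by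
        apply Finset.prod_congr rfl
        intro i hi
        have : ((n - j + i + 1 : ℕ) : ℚ) = (n:ℚ) - j + i + 1 := by
          push_cast [Nat.cast_sub (le_of_lt hjn)]; ring
        rw [this]; ring
      rw [hfac, ← Nat.cast_prod, ← mul_assoc]
      rw [mul_comm ((Nat.factorial (n-j) : ℚ)) ((j:ℚ)), mul_assoc, ← Nat.cast_mul,
        aux_fact_prod m (n - j), show n - j + m = n + m - j by omega]
    -- the evaluation relation for q at j
    have hqj : ((j:ℚ) - (n:ℚ)) * q.eval (j:ℚ) = P.eval (j:ℚ) - (n:ℚ) * (Nat.factorial m : ℚ) := by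
      rw [← hPn, ← hqe]
    -- now pure field algebra
    have hfne : ∀ k : ℕ, ((Nat.factorial k : ℚ)) ≠ 0 :=
      fun k => Nat.cast_ne_zero.mpr (Nat.factorial_ne_zero _)
    rw [hc1, hc2, hc]
    -- isolate q.eval j from hqj
    have hqj' : q.eval (j:ℚ) = (P.eval (j:ℚ) - (n:ℚ) * (Nat.factorial m : ℚ)) / ((j:ℚ) - n) := by
      rw [eq_div_iff hjnq]
      linear_combination hqj
    have hPj' : P.eval (j:ℚ) = (j:ℚ) * (Nat.factorial (n+m-j) : ℚ) / (Nat.factorial (n-j) : ℚ) := by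
      rw [eq_div_iff (hfne (n-j))]
      linear_combination hPj
    rw [hqj', hPj', hc3]
    field_simp
    ring
  rw [Finset.sum_congr rfl hpt, Finset.sum_add_distrib]
  -- split off the j = 0 terms
  have hins : Finset.range (l+1) = insert 0 (Finset.Icc 1 l) := by
    ext x
    simp only [Finset.mem_range, Finset.mem_insert, Finset.mem_Icc]
    omega
  have h0ni : (0:ℕ) ∉ Finset.Icc 1 l := by simp
  have hsum1 : ∑ j ∈ Finset.Icc 1 l, (-1:ℚ)^j * (l.choose j) * (-(q.eval (j:ℚ))) * c
      = (Nat.factorial m : ℚ) * c := by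
    have h := aux_poly l q hdegq
    rw [hins, Finset.sum_insert h0ni] at h
    have h' : ∑ j ∈ Finset.Icc 1 l, (-1:ℚ)^j * (l.choose j) * q.eval (j:ℚ)
        = -(q.eval 0) := by
      simp only [pow_zero, Nat.choose_zero_right, Nat.cast_one, Nat.cast_zero, one_mul] at h
      linarith [h]
    calc ∑ j ∈ Finset.Icc 1 l, (-1:ℚ)^j * (l.choose j) * (-(q.eval (j:ℚ))) * c
        = -(∑ j ∈ Finset.Icc 1 l, (-1:ℚ)^j * (l.choose j) * q.eval (j:ℚ)) * c := by
          rw [← Finset.sum_neg_distrib, Finset.sum_mul]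
          apply Finset.sum_congr rfl
          intro j hj; ring
      _ = (Nat.factorial m : ℚ) * c := by rw [h', hq0]; ring
  have hsum2 : ∑ j ∈ Finset.Icc 1 l,
        ((n:ℚ) * (Nat.factorial m : ℚ) * c) * ((-1:ℚ)^j * (l.choose j) / ((n:ℚ) - j))
      = ((n:ℚ) * (Nat.factorial m : ℚ) * c) *
          ((-1:ℚ)^l * (Nat.factorial l) * (Nat.factorial (n - l - 1)) / (Nat.factorial n))
        - (Nat.factorial m : ℚ) * c := by
    have h := aux_inv l n hln
    rw [hins, Finset.sum_insert h0ni] at h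
    rw [← Finset.mul_sum]
    have h0 : (-1:ℚ)^(0:ℕ) * ((l.choose 0 : ℕ) : ℚ) / ((n:ℚ) - (0:ℕ)) = 1 / (n:ℚ) := by
      simp
    rw [h0] at h
    have h' : ∑ j ∈ Finset.Icc 1 l, (-1:ℚ)^j * (l.choose j) / ((n:ℚ) - j)
        = (-1:ℚ)^l * (Nat.factorial l) * (Nat.factorial (n - l - 1)) / (Nat.factorial n)
          - 1/(n:ℚ) := by
      linarith [h]
    rw [h']
    field_simp
  rw [hsum1, hsum2, hc]
  have hfne : ∀ k : ℕ, ((Nat.factorial k : ℚ)) ≠ 0 :=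
    fun k => Nat.cast_ne_zero.mpr (Nat.factorial_ne_zero _)
  field_simp
  ring
end

section
/- For every natural number m ≥ 1, ∑_{j=1}^{m} (-1)^j · binom(m+1, j-1) · binom(2m+1-j, m+1) = -1. -/
open Finset

lemma gould_aux : ∀ (n : ℕ), ∀ a b : ℕ, n ≤ a →
    ∑ j ∈ range (n+1), (-1:ℤ)^j * (Nat.choose n j) * (Nat.choose (a-j) b) =
      if n ≤ b then ((Nat.choose (a-n) (b-n)) : ℤ) else 0 := by
  intro n
  induction n with
  | zero => intro a b _; simp
  | succ n ih =>
    intro a b ha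
    have h1 := ih a b (by omega)
    have h2 := ih (a-1) b (by omega)
    have hstep : ∑ j ∈ range (n+2), (-1:ℤ)^j * ((n+1).choose j) * ((a-j).choose b)
        = (∑ j ∈ range (n+1), (-1:ℤ)^j * (n.choose j) * ((a-j).choose b))
          - (∑ i ∈ range (n+1), (-1:ℤ)^i * (n.choose i) * ((a-1-i).choose b)) := by
      rw [Finset.sum_range_succ' (fun j => (-1:ℤ)^j * ((n+1).choose j) * ((a-j).choose b)) (n+1)]
      have expand : ∀ i ∈ range (n+1),
          (-1:ℤ)^(i+1) * (((n+1).choose (i+1) : ℕ) : ℤ) * (((a-(i+1)).choose b : ℕ) : ℤ)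
          = (-(((-1:ℤ)^i * ((n.choose i : ℕ) : ℤ) * (((a-1-i).choose b : ℕ) : ℤ))))
            + ((-1:ℤ)^(i+1) * ((n.choose (i+1) : ℕ) : ℤ) * (((a-(i+1)).choose b : ℕ) : ℤ)) := by
        intro i _
        have hc : (n+1).choose (i+1) = n.choose i + n.choose (i+1) := Nat.choose_succ_succ n i
        have e2 : a - (i+1) = a - 1 - i := by omega
        rw [hc, e2]
        push_cast
        ring
      rw [Finset.sum_congr rfl expand, Finset.sum_add_distrib, Finset.sum_neg_distrib]
      have back : ∑ i ∈ range (n+1), (-1:ℤ)^(i+1) * (n.choose (i+1)) * ((a-(i+1)).choose b)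
          = (∑ j ∈ range (n+2), (-1:ℤ)^j * (n.choose j) * ((a-j).choose b))
            - (-1:ℤ)^0 * (n.choose 0) * ((a-0).choose b) := by
        rw [Finset.sum_range_succ' (fun j => (-1:ℤ)^j * (n.choose j) * ((a-j).choose b)) (n+1)]
        ring
      rw [back]
      have last : ∑ j ∈ range (n+2), (-1:ℤ)^j * (n.choose j) * ((a-j).choose b)
          = ∑ j ∈ range (n+1), (-1:ℤ)^j * (n.choose j) * ((a-j).choose b) := by
        rw [Finset.sum_range_succ]
        simp [Nat.choose_succ_self]
      rw [last]
      simp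
      ring
    rw [hstep, h1, h2]
    by_cases hb : n + 1 ≤ b
    · have hb' : n ≤ b := by omega
      simp only [if_pos hb, if_pos hb']
      have hx : a - n = (a - (n+1)) + 1 := by omega
      have hy : b - n = (b - (n+1)) + 1 := by omega
      have hz : a - 1 - n = a - (n+1) := by omega
      rw [hx, hy, hz, Nat.choose_succ_succ]
      push_cast
      ring
    · by_cases hb2 : n ≤ b
      · have hbn : b = n := by omega
        simp only [if_pos hb2, if_neg hb, hbn]
        have : a - 1 - n = a - (n+1) := by omega
        simp [this]
      · simp [if_neg hb, if_neg hb2, if_neg (show ¬ n ≤ b from hb2)]; intro h; omega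

theorem gould_1_83_instance (m : ℕ) (hm : 1 ≤ m) :
    ∑ j ∈ Finset.Icc 1 m,
        (-1 : ℤ) ^ j * (Nat.choose (m + 1) (j - 1) : ℤ) *
          (Nat.choose (2 * m + 1 - j) (m + 1) : ℤ) = -1 := by
  have key := gould_aux (m+1) (2*m) (m+1) (by omega)
  rw [if_pos (le_refl _)] at key
  have h0 : (2*m - (m+1)).choose (m+1 - (m+1)) = 1 := by simp
  rw [h0] at key
  -- peel the last two terms of the range (m+2) sum in key
  rw [Finset.sum_range_succ, Finset.sum_range_succ] at key
  have z1 : Nat.choose (2*m - (m+1)) (m+1) = 0 := Nat.choose_eq_zero_of_lt (by omega)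
  have z2 : Nat.choose (2*m - m) (m+1) = 0 := Nat.choose_eq_zero_of_lt (by omega)
  rw [z1, z2] at key
  simp only [Nat.cast_zero, mul_zero, add_zero, Nat.cast_one] at key
  -- key : ∑ j ∈ range m, (-1)^j * C(m+1,j) * C(2m-j, m+1) = 1
  have reindex : ∑ j ∈ Finset.Icc 1 m,
      (-1 : ℤ) ^ j * (Nat.choose (m + 1) (j - 1) : ℤ) * (Nat.choose (2 * m + 1 - j) (m + 1) : ℤ)
      = ∑ i ∈ range m, (-1:ℤ)^(i+1) * (Nat.choose (m+1) i : ℤ) * (Nat.choose (2*m - i) (m+1) : ℤ) := by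
    rw [← Finset.Ico_add_one_right_eq_Icc, Finset.sum_Ico_eq_sum_range]
    apply Finset.sum_congr (by congr 1)
    intro i _
    have e1 : 1 + i - 1 = i := by omega
    have e2 : 2*m + 1 - (1+i) = 2*m - i := by omega
    rw [e1, e2]
    ring_nf
  rw [reindex]
  have : ∑ i ∈ range m, (-1:ℤ)^(i+1) * (Nat.choose (m+1) i : ℤ) * (Nat.choose (2*m - i) (m+1) : ℤ)
      = - ∑ i ∈ range m, (-1:ℤ)^i * (Nat.choose (m+1) i : ℤ) * (Nat.choose (2*m - i) (m+1) : ℤ) := by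
    rw [← Finset.sum_neg_distrib]
    apply Finset.sum_congr rfl
    intro i _; ring
  rw [this, key]
end

section
/- For every natural number m ≥ 1, ∑_{j=1}^{m+1} (-1)^j · binom(m+1, j-1) · binom(2m+1-j, m) = 0. -/
open Polynomial Finset

lemma gould_poly (m : ℕ) (hm : 1 ≤ m) :
    ∑ k ∈ Finset.range (m + 2),
      (C ((-1 : ℤ) ^ k * ((m + 1).choose k : ℤ)) * (X + 1) ^ (2 * m - k)) =
      (X + 1) ^ (m - 1) * X ^ (m + 1) := by
  have key : ∑ k ∈ Finset.range (m + 2),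
      (C ((-1 : ℤ) ^ k * ((m + 1).choose k : ℤ)) * (X + 1) ^ (m + 1 - k)) = X ^ (m + 1) := by
    have h := sub_pow (X + 1 : ℤ[X]) 1 (m + 1)
    rw [add_sub_cancel_right] at h
    rw [h, ← Finset.sum_range_reflect]
    refine Finset.sum_congr rfl fun j hj => ?_
    rw [Finset.mem_range] at hj
    have hj' : j ≤ m + 1 := by omega
    have h1 : m + 1 + 1 - 1 - j = m + 1 - j := by omega
    rw [h1, Nat.choose_symm hj']
    have h2 : m + 1 - (m + 1 - j) = j := by omega
    rw [h2]
    have h3 : (-1 : ℤ[X]) ^ (m + 1 - j) = (-1) ^ (j + (m + 1)) := by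
      rw [show j + (m + 1) = (m + 1 - j) + 2 * j by omega, pow_add, pow_mul]
      simp
    rw [map_mul, map_pow, map_neg, map_one, h3, C_eq_natCast]
    ring
  calc ∑ k ∈ Finset.range (m + 2),
      (C ((-1 : ℤ) ^ k * ((m + 1).choose k : ℤ)) * (X + 1) ^ (2 * m - k))
      = (X + 1) ^ (m - 1) * ∑ k ∈ Finset.range (m + 2),
        (C ((-1 : ℤ) ^ k * ((m + 1).choose k : ℤ)) * (X + 1) ^ (m + 1 - k)) := by
        rw [Finset.mul_sum]
        refine Finset.sum_congr rfl fun k hk => ?_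
        rw [Finset.mem_range] at hk
        have : 2 * m - k = (m - 1) + (m + 1 - k) := by omega
        rw [this, pow_add]
        ring
    _ = (X + 1) ^ (m - 1) * X ^ (m + 1) := by rw [key]

lemma gould_range (m : ℕ) (hm : 1 ≤ m) :
    ∑ k ∈ Finset.range (m + 2),
      (-1 : ℤ) ^ k * ((m + 1).choose k : ℤ) * ((2 * m - k).choose m : ℤ) = 0 := by
  have h := congrArg (fun p => Polynomial.coeff p m) (gould_poly m hm)
  simp only [finset_sum_coeff, coeff_C_mul, add_comm (X : ℤ[X]) 1] at h
  rw [add_comm (1 : ℤ[X]) X] at h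
  have hL : ∀ k ∈ Finset.range (m + 2),
      (-1 : ℤ) ^ k * ((m + 1).choose k : ℤ) * (((X + 1 : ℤ[X]) ^ (2 * m - k)).coeff m) =
      (-1 : ℤ) ^ k * ((m + 1).choose k : ℤ) * ((2 * m - k).choose m : ℤ) := by
    intro k _
    rw [coeff_X_add_one_pow]
  calc ∑ k ∈ Finset.range (m + 2),
      (-1 : ℤ) ^ k * ((m + 1).choose k : ℤ) * ((2 * m - k).choose m : ℤ)
      = ∑ k ∈ Finset.range (m + 2),
        (-1 : ℤ) ^ k * ((m + 1).choose k : ℤ) * (((X + 1 : ℤ[X]) ^ (2 * m - k)).coeff m) := by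
        exact (Finset.sum_congr rfl hL).symm
    _ = (((X + 1 : ℤ[X]) ^ (m - 1)) * X ^ (m + 1)).coeff m := by
        have h2 := congrArg (fun p : ℤ[X] => p.coeff m) (gould_poly m hm)
        simp only [finset_sum_coeff, coeff_C_mul] at h2
        simpa [mul_assoc] using h2
    _ = 0 := by
        rw [Polynomial.coeff_mul_X_pow']
        simp

theorem gould_6_39_instance (m : ℕ) (hm : 1 ≤ m) :
    ∑ j ∈ Finset.Icc 1 (m + 1),
        (-1 : ℤ) ^ j * (Nat.choose (m + 1) (j - 1) : ℤ) *
          (Nat.choose (2 * m + 1 - j) m : ℤ) = 0 := by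
  have hR := gould_range m hm
  rw [Finset.sum_range_succ] at hR
  have hlast : (-1 : ℤ) ^ (m + 1) * ((m + 1).choose (m + 1) : ℤ) *
      ((2 * m - (m + 1)).choose m : ℤ) = 0 := by
    have : (2 * m - (m + 1)).choose m = 0 :=
      Nat.choose_eq_zero_of_lt (by omega)
    simp [this]
  rw [hlast, add_zero] at hR
  have hIcc : ∑ j ∈ Finset.Icc 1 (m + 1),
      (-1 : ℤ) ^ j * (Nat.choose (m + 1) (j - 1) : ℤ) *
        (Nat.choose (2 * m + 1 - j) m : ℤ) =
      ∑ k ∈ Finset.range (m + 1),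
        (-1 : ℤ) ^ (1 + k) * (Nat.choose (m + 1) k : ℤ) *
          (Nat.choose (2 * m - k) m : ℤ) := by
    rw [show Finset.Icc 1 (m + 1) = Finset.Ico 1 (m + 2) from by exact (Finset.Ico_add_one_right_eq_Icc (a := 1) (b := m + 1)).symm,
      Finset.sum_Ico_eq_sum_range]
    refine Finset.sum_congr (by congr 1) fun k hk => ?_
    simp only [show 1 + k - 1 = k by omega, show 2 * m + 1 - (1 + k) = 2 * m - k by omega]
  rw [hIcc]
  have : ∑ k ∈ Finset.range (m + 1),
      (-1 : ℤ) ^ (1 + k) * (Nat.choose (m + 1) k : ℤ) * (Nat.choose (2 * m - k) m : ℤ) =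
      -∑ k ∈ Finset.range (m + 1),
        (-1 : ℤ) ^ k * (Nat.choose (m + 1) k : ℤ) * (Nat.choose (2 * m - k) m : ℤ) := by
    rw [← Finset.sum_neg_distrib]
    refine Finset.sum_congr rfl fun k _ => ?_
    rw [pow_add]; ring
  rw [this, hR, neg_zero]
end

section
/- For every natural number n ≥ 1, ∑_{k=1}^{n} (-1)^{k-1} · binom(n+k, k) · binom(n, k-1) = (-1)^n · (1 - binom(2n+1, n+1)). -/
set_option maxRecDepth 4000

open PowerSeries Finset

lemma coeff_one_sub_X_pow (n i : ℕ) :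
    (PowerSeries.coeff i) ((1 - PowerSeries.X) ^ n) = (-1 : ℤ) ^ i * n.choose i := by
  have : ((1 - PowerSeries.X : ℤ⟦X⟧)) ^ n
      = ∑ k ∈ range (n + 1), PowerSeries.C (R := ℤ) ((-1) ^ k * n.choose k) * PowerSeries.X ^ k := by
    rw [sub_eq_add_neg, add_comm, add_pow]
    refine Finset.sum_congr rfl fun k _ => ?_
    rw [one_pow, mul_one, map_mul, map_pow, map_neg, map_one, map_natCast, neg_pow]
    ring
  rw [this, map_sum]
  simp only [PowerSeries.coeff_C_mul, PowerSeries.coeff_X_pow, mul_ite, mul_one, mul_zero]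
  rw [Finset.sum_ite_eq (range (n+1)) i]
  by_cases h : i ∈ range (n + 1)
  · rw [if_pos h]
  · rw [if_neg h]
    rw [Finset.mem_range, not_lt] at h
    rw [Nat.choose_eq_zero_of_lt h]
    simp
lemma key_sum (n : ℕ) :
    ∑ i ∈ range (n + 2), (-1 : ℤ) ^ i * n.choose i * ((n + (n + 1 - i)).choose n : ℤ) = 1 := by
  have hf : ((1 - PowerSeries.X : ℤ⟦X⟧)) ^ (n + 1) * PowerSeries.mk (fun k => ((n + k).choose n : ℤ)) = 1 := by
    rw [← PowerSeries.mk_one_pow_eq_mk_choose_add, ← mul_pow]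
    rw [mul_comm (1 - PowerSeries.X), PowerSeries.mk_one_mul_one_sub_eq_one, one_pow]
  have h2 : ((1 - PowerSeries.X : ℤ⟦X⟧)) ^ n * PowerSeries.mk (fun k => ((n + k).choose n : ℤ))
      = PowerSeries.mk 1 := by
    have := congrArg (fun p => (PowerSeries.mk 1 : ℤ⟦X⟧) * p) hf
    simp only [mul_one] at this
    rw [← this, pow_succ', ← mul_assoc, ← mul_assoc,
      PowerSeries.mk_one_mul_one_sub_eq_one, one_mul]
  have h3 := congrArg (PowerSeries.coeff (R := ℤ) (n + 1)) h2
  rw [PowerSeries.coeff_mul, PowerSeries.coeff_mk, Finset.Nat.sum_antidiagonal_eq_sum_range_succ_mk] at h3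
  simp only [PowerSeries.coeff_mk, coeff_one_sub_X_pow, Pi.one_apply] at h3
  convert h3 using 2

theorem easy_sum_appendix_A (n : ℕ) (hn : 1 ≤ n) :
    ∑ k ∈ Finset.Icc 1 n,
        (-1 : ℤ) ^ (k - 1) * (Nat.choose (n + k) k : ℤ) * (Nat.choose n (k - 1) : ℤ) =
      (-1 : ℤ) ^ n * (1 - (Nat.choose (2 * n + 1) (n + 1) : ℤ)) := by
  have key := key_sum n
  rw [Finset.sum_range_succ, Finset.sum_range_succ'] at key
  have h0 : ((-1 : ℤ) ^ 0 * n.choose 0 * ((n + (n + 1 - 0)).choose n : ℤ))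
      = ((2 * n + 1).choose n : ℤ) := by
    norm_num
    congr 1
    omega
  have hlast : ((-1 : ℤ) ^ (n + 1) * n.choose (n + 1) * ((n + (n + 1 - (n + 1))).choose n : ℤ)) = 0 := by
    rw [Nat.choose_eq_zero_of_lt (Nat.lt_succ_self n)]
    simp
  rw [h0, hlast, add_zero] at key
  have hmid : ∑ i ∈ Finset.range n,
      (-1 : ℤ) ^ (i + 1) * n.choose (i + 1) * ((n + (n + 1 - (i + 1))).choose n : ℤ)
      = 1 - ((2 * n + 1).choose n : ℤ) := by linarith
  have hsym : ((2 * n + 1).choose (n + 1) : ℤ) = ((2 * n + 1).choose n : ℤ) := by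
    have := Nat.choose_symm (show n + 1 ≤ 2 * n + 1 by omega) (n := 2 * n + 1)
    rw [show 2 * n + 1 - (n + 1) = n by omega] at this
    exact_mod_cast this.symm
  rw [hsym, ← hmid, Finset.mul_sum]
  refine Finset.sum_nbij' (fun k => n - k) (fun i => n - i) ?_ ?_ ?_ ?_ ?_
  · intro k hk; simp only [Finset.mem_Icc] at hk; simp only [Finset.mem_range]; omega
  · intro i hi; simp only [Finset.mem_range] at hi; simp only [Finset.mem_Icc]; omega
  · intro k hk; simp only [Finset.mem_Icc] at hk; show n - (n - k) = k; omega
  · intro i hi; simp only [Finset.mem_range] at hi; show n - (n - i) = i; omega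
  · intro k hk
    simp only [Finset.mem_Icc] at hk
    rw [show n + 1 - (n - k + 1) = k by omega]
    rw [show (n + k).choose n = (n + k).choose k from Nat.choose_symm_add]
    rw [show n.choose (n - k + 1) = n.choose (k - 1) by
      rw [show n - k + 1 = n - (k - 1) by omega]; exact Nat.choose_symm (by omega)]
    have hpow : (-1 : ℤ) ^ n = (-1 : ℤ) ^ (k - 1) * (-1 : ℤ) ^ (n - k + 1) := by
      rw [← pow_add, show k - 1 + (n - k + 1) = n by omega]
    rw [hpow]
    have hsq : (-1 : ℤ) ^ (n - k + 1) * (-1 : ℤ) ^ (n - k + 1) = 1 := by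
      rw [← pow_add]; exact Even.neg_one_pow ⟨n - k + 1, rfl⟩
    calc (-1 : ℤ) ^ (k - 1) * ((n + k).choose k : ℤ) * (n.choose (k - 1) : ℤ)
        = ((-1 : ℤ) ^ (n - k + 1) * (-1 : ℤ) ^ (n - k + 1)) * ((-1 : ℤ) ^ (k - 1) * ((n + k).choose k : ℤ) * (n.choose (k - 1) : ℤ)) := by rw [hsq, one_mul]
      _ = (-1 : ℤ) ^ (k - 1) * (-1 : ℤ) ^ (n - k + 1) * ((-1 : ℤ) ^ (n - k + 1) * (n.choose (k - 1) : ℤ) * ((n + k).choose k : ℤ)) := by ring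
end

section
/- For every natural number n ≥ 1, ∑_{k=1}^{n} (-1)^k · binom(n+k, k-1) · binom(n+1, k+1) = (-1)^n. -/
open Finset

private lemma keyA (a j : ℕ) :
    (j + 1) * Nat.choose (a + j + 1) (j + 1) = (a + 1) * Nat.choose (a + j + 1) j := by
  have h := Nat.choose_succ_right_eq (a + j + 1) j
  have h2 : a + j + 1 - j = a + 1 := by omega
  rw [h2] at h
  rw [mul_comm, h, mul_comm]

private lemma keyB (a s : ℕ) :
    (s + 1) * Nat.choose (a + 1) (s + 1) = (a + 1) * Nat.choose a s := by
  have h := Nat.add_one_mul_choose_eq a s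
  rw [h, mul_comm]

private lemma star (a i s : ℕ) :
    ((i : ℤ) + s + 2) * Nat.choose (a + i + 1) (i + 1) * Nat.choose (a + 1) (s + 1)
      = ((a : ℤ) + 1) * Nat.choose (a + i + 2) (i + 1) * Nat.choose a s
        + ((a : ℤ) + 1) * Nat.choose (a + i + 1) i * Nat.choose a (s + 1) := by
  have pas1 : Nat.choose (a + i + 2) (i + 1)
      = Nat.choose (a + i + 1) i + Nat.choose (a + i + 1) (i + 1) :=
    Nat.choose_succ_succ (a + i + 1) i
  have pas2 : Nat.choose (a + 1) (s + 1) = Nat.choose a s + Nat.choose a (s + 1) :=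
    Nat.choose_succ_succ a s
  have hA : ((i : ℤ) + 1) * Nat.choose (a + i + 1) (i + 1)
      = ((a : ℤ) + 1) * Nat.choose (a + i + 1) i := by exact_mod_cast congrArg (Nat.cast (R := ℤ)) (keyA a i)
  have hB : ((s : ℤ) + 1) * Nat.choose (a + 1) (s + 1)
      = ((a : ℤ) + 1) * Nat.choose a s := by exact_mod_cast congrArg (Nat.cast (R := ℤ)) (keyB a s)
  rw [pas1]
  push_cast [pas2] at *
  linear_combination ((Nat.choose a s : ℤ) + Nat.choose a (s+1)) * hA
    + (Nat.choose (a + i + 1) (i+1) : ℤ) * hB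

/-- certificate function for telescoping -/
private def Hf (a m : ℕ) (j : ℕ) : ℤ :=
  if 1 ≤ j ∧ j ≤ m then
    (-1) ^ (j + 1) * ((a : ℤ) + 1) * Nat.choose (a + j) (j - 1) * Nat.choose a (m - j)
  else 0

private lemma step (a m j : ℕ) (hj : j ≤ m) :
    (m : ℤ) * ((-1) ^ j * (Nat.choose (a + j) j : ℤ) * (Nat.choose (a + 1) (m - j) : ℤ))
      = Hf a m (j + 1) - Hf a m j := by
  rcases Nat.eq_zero_or_pos j with rfl | hj1
  · rcases Nat.eq_zero_or_pos m with rfl | hm1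
    · simp [Hf]
    · obtain ⟨s, rfl⟩ : ∃ s, m = s + 1 := ⟨m - 1, by omega⟩
      have hB : ((s : ℤ) + 1) * Nat.choose (a + 1) (s + 1)
          = ((a : ℤ) + 1) * Nat.choose a s := by
        exact_mod_cast congrArg (Nat.cast (R := ℤ)) (keyB a s)
      simp only [Hf]
      rw [if_pos (by omega), if_neg (by omega)]
      simp only [Nat.add_sub_cancel, Nat.choose_zero_right]
      push_cast
      linear_combination hB
  · obtain ⟨i, rfl⟩ : ∃ i, j = i + 1 := ⟨j - 1, by omega⟩
    rcases eq_or_lt_of_le hj with rfl | hlt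
    · -- j = m case
      simp only [Hf]
      rw [if_neg (by omega), if_pos (by omega)]
      have hA : ((i : ℤ) + 1) * Nat.choose (a + i + 1) (i + 1)
          = ((a : ℤ) + 1) * Nat.choose (a + i + 1) i := by
        exact_mod_cast congrArg (Nat.cast (R := ℤ)) (keyA a i)
      simp only [Nat.sub_self, Nat.choose_zero_right, Nat.add_sub_cancel]
      have e1 : a + (i + 1) = a + i + 1 := by omega
      rw [e1]
      push_cast
      linear_combination (-1 : ℤ)^(i+1) * hA
    · -- j < m case
      obtain ⟨s, rfl⟩ : ∃ s, m = (i + 1) + (s + 1) := ⟨m - i - 2, by omega⟩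
      simp only [Hf]
      rw [if_pos (by omega), if_pos (by omega)]
      have e1 : a + (i + 1) = a + i + 1 := by omega
      have e2 : a + (i + 1 + 1) = a + i + 2 := by omega
      have e3 : i + 1 + (s + 1) - (i + 1) = s + 1 := by omega
      have e4 : i + 1 + 1 - 1 = i + 1 := by omega
      have e5 : i + 1 - 1 = i := by omega
      have e6 : i + 1 + (s + 1) - (i + 1 + 1) = s := by omega
      rw [e1, e2, e3, e4, e5, e6]
      have hs := star a i s
      push_cast at hs ⊢
      linear_combination (-1 : ℤ)^(i+1) * hs

/-- T(a,m) = 0 for m ≥ 1 : the sequences are convolution inverses -/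
private lemma Tlem (a m : ℕ) (hm : 1 ≤ m) :
    ∑ j ∈ range (m + 1),
      (-1 : ℤ) ^ j * (Nat.choose (a + j) j : ℤ) * (Nat.choose (a + 1) (m - j) : ℤ) = 0 := by
  have h : (m : ℤ) * ∑ j ∈ range (m + 1),
      (-1 : ℤ) ^ j * (Nat.choose (a + j) j : ℤ) * (Nat.choose (a + 1) (m - j) : ℤ)
      = Hf a m (m + 1) - Hf a m 0 := by
    rw [Finset.mul_sum, ← Finset.sum_range_sub (Hf a m) (m + 1)]
    apply Finset.sum_congr rfl
    intro j hj
    exact step a m j (by simpa using Nat.lt_succ_iff.mp (mem_range.mp hj))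
  have h0 : Hf a m 0 = 0 := by simp [Hf]
  have h1 : Hf a m (m + 1) = 0 := by simp only [Hf]; rw [if_neg (by omega)]
  rw [h0, h1, sub_zero] at h
  have hm' : (m : ℤ) ≠ 0 := by exact_mod_cast Nat.one_le_iff_ne_zero.mp hm
  exact (mul_eq_zero.mp h).resolve_left hm'

/-- L(a,m) = (-1)^m -/
private lemma Llem (a m : ℕ) :
    ∑ j ∈ range (m + 1),
      (-1 : ℤ) ^ j * (Nat.choose (a + j) j : ℤ) * (Nat.choose a (m - j) : ℤ)
      = (-1 : ℤ) ^ m := by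
  induction m with
  | zero => simp
  | succ m ih =>
    have hT := Tlem a (m + 1) (by omega)
    have key : ∑ j ∈ range (m + 2),
        (-1 : ℤ) ^ j * (Nat.choose (a + j) j : ℤ) * (Nat.choose (a + 1) (m + 1 - j) : ℤ)
        = (∑ j ∈ range (m + 2),
            (-1 : ℤ) ^ j * (Nat.choose (a + j) j : ℤ) * (Nat.choose a (m + 1 - j) : ℤ))
          + ∑ j ∈ range (m + 1),
            (-1 : ℤ) ^ j * (Nat.choose (a + j) j : ℤ) * (Nat.choose a (m - j) : ℤ) := by
      rw [Finset.sum_range_succ, Finset.sum_range_succ (f := fun j =>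
        (-1 : ℤ) ^ j * (Nat.choose (a + j) j : ℤ) * (Nat.choose a (m + 1 - j) : ℤ))]
      have hlast : (Nat.choose (a + 1) (m + 1 - (m + 1)) : ℤ) = (Nat.choose a (m + 1 - (m + 1)) : ℤ) := by
        simp
      rw [hlast]
      have hsum : ∑ j ∈ range (m + 1),
          (-1 : ℤ) ^ j * (Nat.choose (a + j) j : ℤ) * (Nat.choose (a + 1) (m + 1 - j) : ℤ)
          = ∑ j ∈ range (m + 1),
            ((-1 : ℤ) ^ j * (Nat.choose (a + j) j : ℤ) * (Nat.choose a (m + 1 - j) : ℤ)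
              + (-1 : ℤ) ^ j * (Nat.choose (a + j) j : ℤ) * (Nat.choose a (m - j) : ℤ)) := by
        apply Finset.sum_congr rfl
        intro j hj
        have hjm : j ≤ m := Nat.lt_succ_iff.mp (mem_range.mp hj)
        have e : m + 1 - j = (m - j) + 1 := by omega
        rw [e]
        have pas : Nat.choose (a + 1) (m - j + 1) = Nat.choose a (m - j) + Nat.choose a (m - j + 1) :=
          Nat.choose_succ_succ a (m - j)
        rw [pas]
        push_cast
        ring
      rw [hsum, Finset.sum_add_distrib]
      ring
    rw [key, ih] at hT
    have : ∑ j ∈ range (m + 2),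
        (-1 : ℤ) ^ j * (Nat.choose (a + j) j : ℤ) * (Nat.choose a (m + 1 - j) : ℤ)
        = -(-1 : ℤ) ^ m := by linarith
    rw [this]; ring

theorem gauss_sum_appendix_E (n : ℕ) (hn : 1 ≤ n) :
    ∑ k ∈ Finset.Icc 1 n,
        (-1 : ℤ) ^ k * (Nat.choose (n + k) (k - 1) : ℤ) * (Nat.choose (n + 1) (k + 1) : ℤ) =
      (-1 : ℤ) ^ n := by
  obtain ⟨m, rfl⟩ : ∃ m, n = m + 1 := ⟨n - 1, by omega⟩
  have hIcc : Finset.Icc 1 (m + 1) = Finset.Ico 1 (m + 2) := by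
    ext x; simp [Nat.lt_succ_iff]
  rw [hIcc, Finset.sum_Ico_eq_sum_range]
  have hL := Llem (m + 2) m
  have key : ∀ j ∈ range (m + 1),
      (-1 : ℤ) ^ (1 + j) * (Nat.choose (m + 1 + (1 + j)) (1 + j - 1) : ℤ)
        * (Nat.choose (m + 1 + 1) (1 + j + 1) : ℤ)
      = -((-1 : ℤ) ^ j * (Nat.choose (m + 2 + j) j : ℤ) * (Nat.choose (m + 2) (m - j) : ℤ)) := by
    intro j hj
    have hjm : j ≤ m := Nat.lt_succ_iff.mp (mem_range.mp hj)
    have e1 : m + 1 + (1 + j) = m + 2 + j := by omega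
    have e2 : 1 + j - 1 = j := by omega
    have e3 : m + 1 + 1 = m + 2 := by omega
    have e4 : 1 + j + 1 = j + 2 := by omega
    have sym : Nat.choose (m + 2) (m - j) = Nat.choose (m + 2) (j + 2) := by
      have := Nat.choose_symm (n := m + 2) (k := j + 2) (by omega)
      have e : m + 2 - (j + 2) = m - j := by omega
      rw [e] at this
      exact this
    rw [e1, e2, e3, e4, sym]
    ring
  have e5 : m + 2 - 1 = m + 1 := by omega
  rw [e5, Finset.sum_congr rfl key, Finset.sum_neg_distrib, hL]
  ring
end

section
/- For every natural number n ≥ 1, ∑_{k=1}^{n} (-1)^k · binom(n+k, k-1) · binom(n+1, k+1) · H_{k+1} = (-1)^n · (H_{n-1} + H_{n+1}), where H_m = ∑_{i=1}^{m} 1/i and H_0 = 0. -/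
open Finset

lemma cast_choose_eq (a c b : ℕ) (h : a + c = b) :
    ((b.choose a : ℕ) : ℚ) = (b.factorial : ℚ) / ((a.factorial : ℚ) * (c.factorial : ℚ)) := by
  subst h
  rw [Nat.cast_choose ℚ (Nat.le_add_right a c), Nat.add_sub_cancel_left]

lemma fact_ne (m : ℕ) : ((m.factorial : ℕ) : ℚ) ≠ 0 := by
  exact_mod_cast Nat.factorial_ne_zero m

lemma L0 (m : ℕ) : ∀ x : ℕ, ∑ j ∈ range (m+1),
    (-1:ℚ)^j * (m.choose j : ℚ) * ((x+j).choose m : ℚ) = (-1:ℚ)^m := by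
  induction m with
  | zero => intro x; simp
  | succ m ih =>
    intro x
    set t : ℕ → ℚ := fun j => (-1:ℚ)^j * (m.choose j : ℚ) * ((x+j).choose (m+1) : ℚ) with ht
    have hstep : ∑ j ∈ range (m+2), t j = ∑ j ∈ range (m+1), t j := by
      rw [Finset.sum_range_succ]
      simp [ht, Nat.choose_succ_self]
    have hQ : ∑ i ∈ range (m+1), (-1:ℚ)^i * (m.choose (i+1) : ℚ) * ((x+(i+1)).choose (m+1) : ℚ)
        = ((x).choose (m+1) : ℚ) - ∑ j ∈ range (m+1), t j := by
      have h1 := Finset.sum_range_succ' t (m+1)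
      rw [hstep] at h1
      have h2 : ∑ i ∈ range (m+1), t (i+1)
          = - ∑ i ∈ range (m+1), (-1:ℚ)^i * (m.choose (i+1) : ℚ) * ((x+(i+1)).choose (m+1) : ℚ) := by
        rw [← Finset.sum_neg_distrib]
        exact Finset.sum_congr rfl fun i _ => by simp only [ht]; ring
      have h3 : t 0 = ((x).choose (m+1) : ℚ) := by simp [ht]
      rw [h2, h3] at h1
      linarith
    calc ∑ j ∈ range (m+2), (-1:ℚ)^j * ((m+1).choose j : ℚ) * ((x+j).choose (m+1) : ℚ)
        = ∑ i ∈ range (m+1), (-1:ℚ)^(i+1) * ((m+1).choose (i+1) : ℚ) * ((x+(i+1)).choose (m+1) : ℚ)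
            + ((x).choose (m+1) : ℚ) := by
          rw [Finset.sum_range_succ' (fun j => (-1:ℚ)^j * ((m+1).choose j : ℚ) * ((x+j).choose (m+1) : ℚ)) (m+1)]
          simp
      _ = ∑ i ∈ range (m+1), (-((-1:ℚ)^i * (m.choose i : ℚ) * ((x+(i+1)).choose (m+1) : ℚ))
            - (-1:ℚ)^i * (m.choose (i+1) : ℚ) * ((x+(i+1)).choose (m+1) : ℚ))
            + ((x).choose (m+1) : ℚ) := by
          congr 1
          refine Finset.sum_congr rfl fun i _ => ?_
          rw [Nat.choose_succ_succ m i]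
          push_cast
          ring
      _ = - ∑ i ∈ range (m+1), (-1:ℚ)^i * (m.choose i : ℚ) * ((x+(i+1)).choose (m+1) : ℚ)
            - (((x).choose (m+1) : ℚ) - ∑ j ∈ range (m+1), t j) + ((x).choose (m+1) : ℚ) := by
          rw [Finset.sum_sub_distrib, ← hQ]
          rw [← Finset.sum_neg_distrib]
      _ = ∑ i ∈ range (m+1), ((-1:ℚ)^i * (m.choose i : ℚ) * ((x+i).choose (m+1) : ℚ)
            - (-1:ℚ)^i * (m.choose i : ℚ) * ((x+(i+1)).choose (m+1) : ℚ)) := by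
          rw [Finset.sum_sub_distrib]
          simp only [ht]
          ring
      _ = ∑ i ∈ range (m+1), -((-1:ℚ)^i * (m.choose i : ℚ) * ((x+i).choose m : ℚ)) := by
          refine Finset.sum_congr rfl fun i _ => ?_
          have : (x+(i+1)).choose (m+1) = (x+i).choose m + (x+i).choose (m+1) := by
            rw [show x+(i+1) = (x+i)+1 by ring]
            exact Nat.choose_succ_succ (x+i) m
          rw [this]
          push_cast
          ring
      _ = (-1:ℚ)^(m+1) := by
          rw [Finset.sum_neg_distrib, ih x]
          ring

lemma L1 (n : ℕ) (hn : 1 ≤ n) :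
    ∑ k ∈ Icc 1 n, (-1:ℚ)^k * ((n+k+1).choose (n+2) : ℚ) * ((n+2).choose (k+2) : ℚ)
      = (-1:ℚ)^n := by
  obtain ⟨x, rfl⟩ : ∃ x, n = x + 1 := ⟨n - 1, by omega⟩
  have h0 := L0 (x+3) x
  rw [show x+3+1 = x+4 by ring] at h0
  rw [Finset.sum_range_succ' _ (x+3)] at h0
  rw [Finset.sum_range_succ' _ (x+2)] at h0
  rw [Finset.sum_range_succ' _ (x+1)] at h0
  have z0 : ((x+0).choose (x+3) : ℚ) = 0 := by
    norm_cast; exact Nat.choose_eq_zero_of_lt (by omega)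
  have z1 : ((x+(0+1)).choose (x+3) : ℚ) = 0 := by
    norm_cast; exact Nat.choose_eq_zero_of_lt (by omega)
  have z2 : ((x+(0+1+1)).choose (x+3) : ℚ) = 0 := by
    norm_cast; exact Nat.choose_eq_zero_of_lt (by omega)
  rw [z0, z1, z2] at h0
  simp only [mul_zero, zero_mul, add_zero] at h0
  -- now h0 : ∑ i ∈ range (x+1), (-1)^(i+1+1+1) * C(x+3, i+1+1+1) * C(x+(i+1+1+1), x+3) = (-1)^(x+3)
  have hconv : ∑ k ∈ Icc 1 (x+1), (-1:ℚ)^k * ((x+1+k+1).choose (x+3) : ℚ) * ((x+3).choose (k+2) : ℚ)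
      = ∑ i ∈ range (x+1), (-1:ℚ)^(i+1) * ((x+1+(i+1)+1).choose (x+3) : ℚ) * ((x+3).choose ((i+1)+2) : ℚ) := by
    rw [← Finset.Ico_add_one_right_eq_Icc, Finset.sum_Ico_eq_sum_range]
    refine Finset.sum_congr (by norm_num) fun i _ => by rw [add_comm 1 i]
  rw [hconv]
  have : ∀ i, (-1:ℚ)^(i+1) * ((x+1+(i+1)+1).choose (x+3) : ℚ) * ((x+3).choose ((i+1)+2) : ℚ)
      = (-1:ℚ)^(i+1+1+1) * (((x+3).choose (i+1+1+1) : ℕ) : ℚ) * (((x+(i+1+1+1)).choose (x+3) : ℕ) : ℚ) := by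
    intro i
    rw [show x+1+(i+1)+1 = x+(i+1+1+1) by ring, show (i+1)+2 = i+1+1+1 by ring]
    ring
  rw [Finset.sum_congr rfl fun i _ => this i, h0]
  ring

noncomputable def fq (n k : ℕ) : ℚ :=
  (-1)^k * ((n+k).choose (n+1) : ℚ) * ((n+1).choose (k+1) : ℚ)

noncomputable def gq (n k : ℕ) : ℚ :=
  (-1)^(k+1) * (2*(n+1)/n) * ((n+k).choose (n+2) : ℚ) * ((n+1).choose k : ℚ)

lemma T1 (n k : ℕ) (h1 : 1 ≤ k) (h2 : k ≤ n) :
    fq (n+1) k + fq n k = gq n (k+1) - gq n k := by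
  rcases Nat.lt_or_ge k 2 with hk | hk
  · -- k = 1
    have hk1 : k = 1 := by omega
    subst hk1
    obtain ⟨x, rfl⟩ : ∃ x, n = x + 1 := ⟨n - 1, by omega⟩
    simp only [fq, gq]
    have c1 : ((x+1+1+1).choose (x+1+1+1) : ℚ) = 1 := by norm_num
    have c0 : ((x+1+1).choose (x+1+1) : ℚ) = 1 := by norm_num
    have z : ((x+1+1).choose (x+1+2) : ℚ) = 0 := by
      norm_cast; exact Nat.choose_eq_zero_of_lt (by omega)
    rw [show x+1+1+1 = x+3 from by ring] at *
    rw [show x+1+1 = x+2 from by ring] at *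
    rw [show x+1+2 = x+3 from by ring] at *
    rw [cast_choose_eq 2 x (x+2) (by ring), cast_choose_eq 2 (x+1) (x+3) (by ring),
        cast_choose_eq 1 (x+1) (x+2) (by ring)]
    rw [c1, c0, z]
    rw [show (x+3 : ℕ).factorial = (x+3)*((x+2).factorial) from by
          rw [show x+3 = (x+2)+1 from by ring]; exact Nat.factorial_succ _,
        show (x+2 : ℕ).factorial = (x+2)*((x+1).factorial) from by
          rw [show x+2 = (x+1)+1 from by ring]; exact Nat.factorial_succ _,
        show (x+1 : ℕ).factorial = (x+1)*(x.factorial) from Nat.factorial_succ _]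
    have hx := fact_ne x
    have h2f : ((2:ℕ).factorial : ℚ) = 2 := by norm_num [Nat.factorial]
    push_cast
    rw [h2f]
    have hx1 : (x:ℚ)+1 ≠ 0 := by positivity
    field_simp
    ring
  · -- k ≥ 2
    obtain ⟨i, rfl⟩ : ∃ i, k = i + 2 := ⟨k - 2, by omega⟩
    obtain ⟨m, rfl⟩ : ∃ m, n = i + m + 2 := ⟨n - i - 2, by omega⟩
    simp only [fq, gq]
    rw [show i+m+2+1+(i+2) = (2*i+m+4)+1 from by ring,
        show i+m+2+1+1 = (i+m+3)+1 from by ring,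
        show i+2+1 = (i+2)+1 from by ring,
        show i+m+2+(i+2) = 2*i+m+4 from by ring,
        show i+m+2+1 = i+m+3 from by ring,
        show i+m+2+(i+2+1) = (2*i+m+4)+1 from by ring,
        show i+m+2+2 = (i+m+3)+1 from by ring,
        show i+2+1+1 = ((i+2)+1)+1 from by ring]
    push_cast
    rw [cast_choose_eq ((i+m+3)+1) (i+1) ((2*i+m+4)+1) (by ring),
        cast_choose_eq ((i+2)+1) (m+1) ((i+m+3)+1) (by ring),
        cast_choose_eq (i+m+3) (i+1) (2*i+m+4) (by ring),
        cast_choose_eq ((i+2)+1) m (i+m+3) (by ring),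
        cast_choose_eq ((i+m+3)+1) i (2*i+m+4) (by ring),
        cast_choose_eq (i+2) (m+1) (i+m+3) (by ring)]
    have e2 : (((i+2).factorial : ℕ) : ℚ) = ((i:ℚ)+2)*((i:ℚ)+1)*((i.factorial : ℕ) : ℚ) := by
      have h := Nat.factorial_succ (i+1)
      rw [show i+1+1 = i+2 from by ring, Nat.factorial_succ i] at h
      rw [h]; push_cast; ring
    rw [Nat.factorial_succ (2*i+m+4), Nat.factorial_succ (i+m+3),
        Nat.factorial_succ (i+2), Nat.factorial_succ i, Nat.factorial_succ m]
    push_cast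
    rw [e2]
    have n1 := fact_ne (2*i+m+4)
    have n2 := fact_ne (i+m+3)
    have n3 := fact_ne i
    have n4 := fact_ne m
    have p1 : (i:ℚ)+m+2 ≠ 0 := by positivity
    field_simp
    ring

lemma Hsucc (m : ℕ) : H (m+1) = H m + 1/((m:ℚ)+1) := by
  unfold H
  rw [Finset.sum_Icc_succ_top (by omega)]
  push_cast
  ring

lemma Icc_to_range (n : ℕ) (φ : ℕ → ℚ) : ∑ k ∈ Icc 1 n, φ k = ∑ i ∈ range n, φ (i+1) := by
  rw [← Finset.Ico_add_one_right_eq_Icc, Finset.sum_Ico_eq_sum_range]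
  refine Finset.sum_congr (by norm_num) fun i _ => by rw [add_comm]

lemma gq_one (n : ℕ) : gq n 1 = 0 := by
  unfold gq
  have : (n+1).choose (n+2) = 0 := Nat.choose_eq_zero_of_lt (by omega)
  rw [this]
  push_cast
  ring

lemma boundary (n : ℕ) (hn : 1 ≤ n) : gq n (n+1) = - fq (n+1) (n+1) := by
  obtain ⟨x, rfl⟩ : ∃ x, n = x + 1 := ⟨n - 1, by omega⟩
  unfold gq fq
  rw [Nat.choose_self (x+1+1), Nat.choose_self (x+1+1+1)]
  rw [show x+1+1+(x+1+1) = (2*x+3)+1 from by ring,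
      show x+1+2 = x+3 from by ring, show x+1+1+1 = x+3 from by ring,
      show x+1+(x+1+1) = 2*x+3 from by ring]
  rw [cast_choose_eq (x+3) x (2*x+3) (by ring),
      cast_choose_eq (x+3) (x+1) ((2*x+3)+1) (by ring)]
  rw [Nat.factorial_succ (2*x+3), Nat.factorial_succ x]
  push_cast
  have n1 := fact_ne (2*x+3)
  have n2 := fact_ne (x+3)
  have n3 := fact_ne x
  have p1 : (x:ℚ)+1 ≠ 0 := by positivity
  field_simp
  ring

lemma gq_succ (n k : ℕ) (hn : 1 ≤ n) : gq n (k+1) * (1/((k:ℚ)+2))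
    = 2*(n+1)/(n*(n+2)) * ((-1:ℚ)^k * ((n+k+1).choose (n+2) : ℚ) * ((n+2).choose (k+2) : ℚ)) := by
  unfold gq
  rw [show n+(k+1) = n+k+1 from by ring]
  have h := Nat.add_one_mul_choose_eq (n+1) (k+1)
  have h' : ((n:ℚ)+2) * ((n+1).choose (k+1) : ℚ) = ((n+2).choose (k+2) : ℚ) * ((k:ℚ)+2) := by
    exact_mod_cast h
  have hn0 : (n:ℚ) ≠ 0 := by positivity
  have hn2 : (n:ℚ)+2 ≠ 0 := by positivity
  have hk2 : (k:ℚ)+2 ≠ 0 := by positivity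
  have hc : ((n+1).choose (k+1) : ℚ) = ((n+2).choose (k+2) : ℚ) * ((k:ℚ)+2) / ((n:ℚ)+2) := by
    field_simp
    linarith [h']
  rw [hc]
  field_simp
  ring

noncomputable def Sq (n : ℕ) : ℚ := ∑ k ∈ Icc 1 n, fq n k * H (k+1)

lemma recur (n : ℕ) (hn : 1 ≤ n) :
    Sq (n+1) + Sq n = (-1:ℚ)^(n+1) * (2*(n+1)/(n*(n+2))) := by
  have hsplit : Sq (n+1) = ∑ k ∈ Icc 1 n, fq (n+1) k * H (k+1) + fq (n+1) (n+1) * H (n+1+1) :=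
    Finset.sum_Icc_succ_top (by omega) _
  have h1 : ∑ k ∈ Icc 1 n, fq (n+1) k * H (k+1) + Sq n
      = ∑ k ∈ Icc 1 n, (gq n (k+1) - gq n k) * H (k+1) := by
    rw [Sq, ← Finset.sum_add_distrib]
    refine Finset.sum_congr rfl fun k hk => ?_
    rw [mem_Icc] at hk
    rw [← T1 n k hk.1 hk.2]
    ring
  have h2 : ∑ k ∈ Icc 1 n, (gq n (k+1) - gq n k) * H (k+1)
      = ∑ i ∈ range n, ((gq n ((i+1)+1) * H ((i+1)+2) - gq n (i+1) * H (i+2))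
          - gq n ((i+1)+1) * (1/(((i:ℚ)+1)+2))) := by
    rw [Icc_to_range n (fun k => (gq n (k+1) - gq n k) * H (k+1))]
    refine Finset.sum_congr rfl fun i _ => ?_
    have hs : H ((i+1)+2) = H ((i+1)+1) + 1/(((i:ℚ)+1)+1+1) := by
      rw [show (i+1)+2 = ((i+1)+1)+1 from by ring, Hsucc ((i+1)+1)]
      push_cast
      ring
    rw [hs]
    rw [show (i+1)+1 = i+2 from by ring]
    ring
  have h3 : ∑ i ∈ range n, (gq n ((i+1)+1) * H ((i+1)+2) - gq n (i+1) * H (i+2))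
      = gq n (n+1) * H (n+2) - gq n 1 * H 2 := by
    have := Finset.sum_range_sub (fun j => gq n (j+1) * H (j+2)) n
    simpa using this
  have h4 : ∑ i ∈ range n, gq n ((i+1)+1) * (1/(((i:ℚ)+1)+2))
      = 2*(n+1)/(n*(n+2)) * (-1:ℚ)^n := by
    have hc : ∀ i : ℕ, gq n ((i+1)+1) * (1/(((i:ℚ)+1)+2))
        = 2*(n+1)/(n*(n+2)) * ((-1:ℚ)^(i+1) * ((n+(i+1)+1).choose (n+2) : ℚ) * ((n+2).choose ((i+1)+2) : ℚ)) := by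
      intro i
      have := gq_succ n (i+1) hn
      rw [show ((i+1:ℕ):ℚ) = (i:ℚ)+1 from by push_cast; ring] at this
      exact this
    rw [Finset.sum_congr rfl fun i _ => hc i, ← Finset.mul_sum]
    have hL := L1 n hn
    rw [Icc_to_range n (fun k => (-1:ℚ)^k * ((n+k+1).choose (n+2) : ℚ) * ((n+2).choose (k+2) : ℚ))] at hL
    rw [hL]
  rw [hsplit]
  have : ∑ k ∈ Icc 1 n, fq (n+1) k * H (k+1) + fq (n+1) (n+1) * H (n+1+1) + Sq n
      = (∑ k ∈ Icc 1 n, fq (n+1) k * H (k+1) + Sq n) + fq (n+1) (n+1) * H (n+1+1) := by ring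
  rw [this, h1, h2, Finset.sum_sub_distrib, h3, h4, gq_one, boundary n hn]
  rw [show n+1+1 = n+2 from by ring]
  ring

theorem key_identity_appendix_E (n : ℕ) (hn : 1 ≤ n) :
    ∑ k ∈ Finset.Icc 1 n,
        (-1 : ℚ) ^ k * (Nat.choose (n + k) (k - 1) : ℚ) * (Nat.choose (n + 1) (k + 1) : ℚ) *
          H (k + 1) =
      (-1 : ℚ) ^ n * (H (n - 1) + H (n + 1)) := by
  have hconv : ∀ m : ℕ, ∑ k ∈ Finset.Icc 1 m,
      (-1 : ℚ) ^ k * (Nat.choose (m + k) (k - 1) : ℚ) * (Nat.choose (m + 1) (k + 1) : ℚ) *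
        H (k + 1) = Sq m := by
    intro m
    rw [Sq]
    refine Finset.sum_congr rfl fun k hk => ?_
    rw [mem_Icc] at hk
    have hd : m + k - (m+1) = k - 1 := by omega
    have hsym : (m+k).choose (k-1) = (m+k).choose (m+1) := by
      rw [← hd, Nat.choose_symm (by omega)]
    rw [hsym, fq]
  rw [hconv n]
  induction n, hn using Nat.le_induction with
  | base =>
    rw [Sq]
    rw [show (1:ℕ) - 1 = 0 from rfl]
    have h0 : H 0 = 0 := by simp [H]
    rw [h0, Finset.Icc_self, Finset.sum_singleton, fq]
    norm_num
  | succ n hn ih =>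
    have hrec := recur n hn
    have hSq : Sq (n+1) = - Sq n + (-1:ℚ)^(n+1) * (2*(n+1)/(n*(n+2))) := by linarith
    rw [hSq, ih]
    rw [show n+1-1 = n from by omega]
    obtain ⟨x, rfl⟩ : ∃ x, n = x + 1 := ⟨n - 1, by omega⟩
    rw [show x+1-1 = x from by omega]
    have hHn : H (x+1) = H x + 1/((x:ℚ)+1) := Hsucc x
    have hHn2 : H (x+1+1+1) = H (x+1+1) + 1/((x:ℚ)+1+1+1) := by
      rw [Hsucc (x+1+1)]
      push_cast
      ring
    rw [hHn, hHn2]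
    have p1 : (x:ℚ)+1 ≠ 0 := by positivity
    have p2 : (x:ℚ)+3 ≠ 0 := by positivity
    push_cast
    field_simp
    ring
end

section
/- For every natural number n, ∑_{k=0}^{n} (-1)^k · binom(2k, k) · binom(n+k, 2k) = (-1)^n. -/
open Finset

theorem gould_vol4_1_4 (n : ℕ) :
    ∑ k ∈ Finset.range (n + 1),
        (-1 : ℤ) ^ k * (Nat.choose (2 * k) k : ℤ) * (Nat.choose (n + k) (2 * k) : ℤ) =
      (-1 : ℤ) ^ n := by
  -- Step 1: C(2k,k) * C(n+k,2k) = C(n,k) * C(n+k,k)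
  have step1 : ∀ k ∈ range (n + 1),
      (-1 : ℤ) ^ k * (Nat.choose (2 * k) k : ℤ) * (Nat.choose (n + k) (2 * k) : ℤ)
        = (-1 : ℤ) ^ k * (Nat.choose n k : ℤ) * (Nat.choose (n + k) k : ℤ) := by
    intro k hk
    rw [mem_range, Nat.lt_succ_iff] at hk
    have h := Nat.choose_mul (n := n + k) (k := 2 * k) (s := k) (by omega)
    have h2 : n + k - k = n := by omega
    have h3 : 2 * k - k = k := by omega
    rw [h2, h3] at h
    have h' : ((n + k).choose (2 * k) : ℤ) * ((2 * k).choose k : ℤ)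
        = ((n + k).choose k : ℤ) * (n.choose k : ℤ) := by exact_mod_cast h
    linear_combination (-1 : ℤ) ^ k * h'
  rw [Finset.sum_congr rfl step1]
  -- Step 2: Vandermonde: C(n+k,k) = ∑_j C(n,j) C(k,j)
  have vdm : ∀ k ∈ range (n + 1), ((n + k).choose k : ℤ)
      = ∑ j ∈ range (n + 1), (n.choose j : ℤ) * (k.choose j : ℤ) := by
    intro k hk
    rw [mem_range, Nat.lt_succ_iff] at hk
    have h1 : (n + k).choose k
        = ∑ i ∈ range (k + 1), n.choose i * k.choose (k - i) := by
      rw [Nat.add_choose_eq, Finset.Nat.sum_antidiagonal_eq_sum_range_succ_mk]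
    have h2 : ∑ i ∈ range (k + 1), n.choose i * k.choose (k - i)
        = ∑ i ∈ range (k + 1), n.choose i * k.choose i := by
      refine Finset.sum_congr rfl fun i hi => ?_
      rw [mem_range, Nat.lt_succ_iff] at hi
      rw [Nat.choose_symm hi]
    have h3 : ∑ i ∈ range (k + 1), n.choose i * k.choose i
        = ∑ i ∈ range (n + 1), n.choose i * k.choose i := by
      refine Finset.sum_subset (range_subset_range.mpr (by omega)) fun i _ hi => ?_
      rw [mem_range, Nat.lt_succ_iff] at hi
      simp [Nat.choose_eq_zero_of_lt (show k < i by omega)]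
    rw [h1, h2, h3]
    push_cast
    ring
  calc
    ∑ k ∈ range (n + 1), (-1 : ℤ) ^ k * (n.choose k : ℤ) * ((n + k).choose k : ℤ)
        = ∑ k ∈ range (n + 1), ∑ j ∈ range (n + 1),
            (n.choose j : ℤ) * ((-1 : ℤ) ^ k * (n.choose k : ℤ) * (k.choose j : ℤ)) := by
          refine Finset.sum_congr rfl fun k hk => ?_
          rw [vdm k hk, Finset.mul_sum]
          refine Finset.sum_congr rfl fun j _ => by ring
    _ = ∑ j ∈ range (n + 1), (n.choose j : ℤ) *
          (∑ k ∈ range (n + 1), (-1 : ℤ) ^ k * (n.choose k : ℤ) * (k.choose j : ℤ)) := by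
          rw [Finset.sum_comm]
          exact Finset.sum_congr rfl fun j _ => by rw [Finset.mul_sum]
    _ = ∑ j ∈ range (n + 1), (n.choose j : ℤ) *
          (if j = n then (-1 : ℤ) ^ n else 0) := by
          refine Finset.sum_congr rfl fun j hj => ?_
          rw [mem_range, Nat.lt_succ_iff] at hj
          congr 1
          -- inner orthogonality sum
          have hsplit : range (n + 1) = range j ∪ Ico j (n + 1) := by
            rw [Finset.range_eq_Ico, Finset.range_eq_Ico, Finset.Ico_union_Ico_eq_Ico] <;> omega
          rw [hsplit, Finset.sum_union (by
            rw [Finset.range_eq_Ico]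
            exact Finset.Ico_disjoint_Ico_consecutive 0 j (n + 1))]
          have hz : ∑ k ∈ range j, (-1 : ℤ) ^ k * (n.choose k : ℤ) * (k.choose j : ℤ) = 0 := by
            refine Finset.sum_eq_zero fun k hk => ?_
            rw [mem_range] at hk
            rw [Nat.choose_eq_zero_of_lt hk]
            push_cast; ring
          rw [hz, zero_add, Finset.sum_Ico_eq_sum_range]
          have hterm : ∀ i ∈ range (n + 1 - j),
              (-1 : ℤ) ^ (j + i) * (n.choose (j + i) : ℤ) * ((j + i).choose j : ℤ)
                = (-1 : ℤ) ^ j * (n.choose j : ℤ) *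
                    ((-1 : ℤ) ^ i * ((n - j).choose i : ℤ)) := by
            intro i hi
            rw [mem_range] at hi
            have h := Nat.choose_mul (n := n) (k := j + i) (s := j) (by omega)
            have h2 : j + i - j = i := by omega
            rw [h2] at h
            have h' : (n.choose (j + i) : ℤ) * ((j + i).choose j : ℤ)
                = (n.choose j : ℤ) * ((n - j).choose i : ℤ) := by exact_mod_cast h
            rw [pow_add]
            linear_combination ((-1 : ℤ) ^ j * (-1 : ℤ) ^ i) * h'
          rw [Finset.sum_congr rfl hterm, ← Finset.mul_sum]
          have hr : n + 1 - j = (n - j) + 1 := by omega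
          rw [hr, Int.alternating_sum_range_choose]
          by_cases h : j = n
          · subst h
            simp
          · rw [if_neg (by omega), if_neg h, mul_zero]
    _ = (-1 : ℤ) ^ n := by
          rw [Finset.sum_eq_single n (fun j _ hj => by rw [if_neg hj, mul_zero])
            (fun h => absurd (Finset.self_mem_range_succ n) h)]
          simp
end

section
/- For every natural number m ≥ 1, ∑_{n=2}^{m+1} (1/(n+1)) · ( ∑_{j=1}^{n-1} (-1)^{j-1} · binom(2j-1, j) · binom(m+j, 2j-1) ) = (-1)^m · (H_{m+2} - H_m - H_{m+1}), where H_k = ∑_{i=1}^{k} 1/i. -/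
set_option maxHeartbeats 1000000

open Finset Nat

/-! ### Auxiliary definitions -/

def tQ (m k : ℕ) : ℚ := (-1)^k * ((2*k+1).choose (k+1) : ℚ) * ((m+k+1).choose (2*k+1) : ℚ)

def TQ (m N : ℕ) : ℚ := ∑ k ∈ Finset.range N, tQ m k

def WQ (m N : ℕ) : ℚ := (-1)^(N+1) * (2*(m:ℚ)+3) * N * 2 / (((m:ℚ)+1)*((m:ℚ)+2))
    * ((2*N-1).choose N : ℚ) * ((m+N+1).choose (2*N) : ℚ)

def bQ (m k : ℕ) : ℚ := (-1)^(k+1) * (k:ℚ) * ((2*k-1).choose k : ℚ) * ((m+k+1).choose (2*k) : ℚ) / ((k:ℚ)+2)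

def BQ (m : ℕ) : ℚ := ∑ k ∈ Finset.range (m+1), bQ m k

def RQ (m k : ℚ) : ℚ :=
    (2*k*(2*(k+2)*(k-1) + 3*m*(3*k^2+9*k+4) + m^2*(6*k^2+27*k+19) + m^3*(k+1)*(k+8) + m^4*(k+1)))
    / ((k+1)*(k+2)*m*(m+1)*(m+3)*(m+4))

def GQ (m k : ℕ) : ℚ := RQ (m:ℚ) (k:ℚ) * ((-1)^(k+1) * ((2*k-1).choose k : ℚ) * ((m+k+1).choose (2*k) : ℚ))

def betaQ (m : ℕ) : ℚ :=
    ((-1)^(m+1)*(1/((m:ℚ)+3)-1/((m:ℚ)+2)-1/((m:ℚ)+1))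
      - (-1)^m*(((2*m+3).choose (m+1) : ℚ)-1)/((m:ℚ)+3)) * ((m:ℚ)+1)*((m:ℚ)+2)/(2*(2*(m:ℚ)+3))

/-! ### Basic facts -/

lemma H_zero : H 0 = 0 := by simp [H]

lemma H_succ (n : ℕ) : H (n+1) = H n + 1/((n:ℚ)+1) := by
  rw [H, H, ← Finset.Ico_add_one_right_eq_Icc, ← Finset.Ico_add_one_right_eq_Icc,
    Finset.sum_Ico_succ_top (by omega)]
  push_cast
  ring

lemma choose2 (m : ℕ) : ((m+2).choose 2 : ℚ) * 2 = ((m:ℚ)+2)*((m:ℚ)+1) := by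
  have h0 := Nat.choose_succ_right_eq (m+2) 1
  norm_num [Nat.choose_one_right] at h0
  calc ((m+2).choose 2 : ℚ)*2 = (((m+2).choose 2 * 2 : ℕ) : ℚ) := by push_cast; ring
    _ = (((m+2)*(m+1) : ℕ) : ℚ) := by rw [h0]
    _ = _ := by push_cast; ring

/-! ### Pointwise identities -/

lemma I0 (m : ℕ) : tQ (m+1) 0 + tQ m 0 = WQ m 1 - WQ m 0 := by
  have hm1 : ((m:ℚ)+1) ≠ 0 := by positivity
  have hm2 : ((m:ℚ)+2) ≠ 0 := by positivity
  have h2 := choose2 m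
  simp only [tQ, WQ]
  norm_num [Nat.choose_one_right]
  field_simp
  nlinarith [h2]

lemma I1 (s d : ℕ) : tQ (s+2+d+1) (s+1) + tQ (s+2+d) (s+1)
    = WQ (s+2+d) (s+1+1) - WQ (s+2+d) (s+1) := by
  simp only [tQ, WQ]
  rw [show 2*(s+1)+1 = 2*s+3 from by ring,
      show (s+1)+1 = s+2 from rfl,
      show s+2+d+1+(s+1)+1 = 2*s+d+5 from by ring,
      show s+2+d+(s+1)+1 = 2*s+d+4 from by ring,
      show 2*(s+2)-1 = 2*s+3 from by omega,
      show s+2+d+(s+2)+1 = 2*s+d+5 from by ring,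
      show 2*(s+2) = 2*s+4 from by ring,
      show 2*(s+1)-1 = 2*s+1 from by omega,
      show 2*(s+1) = 2*s+2 from by ring]
  rw [Nat.cast_choose ℚ (show s+2 ≤ 2*s+3 by omega),
      Nat.cast_choose ℚ (show 2*s+3 ≤ 2*s+d+5 by omega),
      Nat.cast_choose ℚ (show 2*s+3 ≤ 2*s+d+4 by omega),
      Nat.cast_choose ℚ (show 2*s+4 ≤ 2*s+d+5 by omega),
      Nat.cast_choose ℚ (show s+1 ≤ 2*s+1 by omega),
      Nat.cast_choose ℚ (show 2*s+2 ≤ 2*s+d+4 by omega)]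
  rw [show 2*s+3-(s+2) = s+1 from by omega,
      show 2*s+d+5-(2*s+3) = d+2 from by omega,
      show 2*s+d+4-(2*s+3) = d+1 from by omega,
      show 2*s+d+5-(2*s+4) = d+1 from by omega,
      show 2*s+1-(s+1) = s from by omega,
      show 2*s+d+4-(2*s+2) = d+2 from by omega]
  rw [show (2*s+4)! = (2*s+4)*((2*s+3)!) from rfl,
      show (2*s+3)! = (2*s+3)*((2*s+2)!) from rfl,
      show (2*s+2)! = (2*s+2)*((2*s+1)!) from rfl,
      show (2*s+d+5)! = (2*s+d+5)*((2*s+d+4)!) from rfl,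
      show (s+2)! = (s+2)*((s+1)!) from rfl,
      show (d+2)! = (d+2)*((d+1)!) from rfl,
      show (s+1)! = (s+1)*(s !) from rfl]
  have f1 : ((s ! : ℚ)) ≠ 0 := by exact_mod_cast s.factorial_ne_zero
  have f2 : (((2*s+1)! : ℚ)) ≠ 0 := by exact_mod_cast (2*s+1).factorial_ne_zero
  have f3 : (((2*s+d+4)! : ℚ)) ≠ 0 := by exact_mod_cast (2*s+d+4).factorial_ne_zero
  have f4 : (((d+1)! : ℚ)) ≠ 0 := by exact_mod_cast (d+1).factorial_ne_zero
  push_cast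
  field_simp
  ring

lemma WQ_zero (m : ℕ) : WQ m 0 = 0 := by simp [WQ]

lemma TQ_succ (m N : ℕ) : TQ m (N+1) = TQ m N + tQ m N := Finset.sum_range_succ _ _

lemma LA (m : ℕ) : ∀ N, N ≤ m → TQ (m+1) N + TQ m N = WQ m N := by
  intro N
  induction N with
  | zero => intro _; simp [TQ, WQ_zero]
  | succ N ih =>
    intro h
    have hN : N ≤ m := by omega
    have key : tQ (m+1) N + tQ m N = WQ m (N+1) - WQ m N := by
      match N, h with
      | 0, _ => simpa using I0 m
      | (s+1), h =>
        obtain ⟨d, rfl⟩ : ∃ d, m = s+2+d := ⟨m-(s+2), by omega⟩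
        exact I1 s d
    rw [TQ_succ, TQ_succ]
    have := ih hN
    linarith

lemma I2 (s : ℕ) : WQ (s+1) (s+1) - (-1)^(s+1+1)*(((2*(s+1)+1).choose (s+1) : ℚ)-1) + tQ (s+2) (s+1)
    = (-1)^(s+1+2)*(((2*(s+2)+1).choose (s+2) : ℚ)-1) := by
  simp only [tQ, WQ]
  rw [show 2*(s+1)+1 = 2*s+3 from by ring,
      show 2*(s+2)+1 = 2*s+5 from by ring,
      show 2*(s+1)-1 = 2*s+1 from by omega,
      show s+1+(s+1)+1 = 2*s+3 from by ring,
      show s+2+(s+1)+1 = 2*s+4 from by ring,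
      show 2*(s+1) = 2*s+2 from by ring,
      show (s+1)+1 = s+2 from rfl]
  rw [Nat.cast_choose ℚ (show s+1 ≤ 2*s+1 by omega),
      Nat.cast_choose ℚ (show 2*s+2 ≤ 2*s+3 by omega),
      Nat.cast_choose ℚ (show s+1 ≤ 2*s+3 by omega),
      Nat.cast_choose ℚ (show s+2 ≤ 2*s+3 by omega),
      Nat.cast_choose ℚ (show 2*s+3 ≤ 2*s+4 by omega),
      Nat.cast_choose ℚ (show s+2 ≤ 2*s+5 by omega)]
  rw [show 2*s+1-(s+1) = s from by omega,
      show 2*s+3-(2*s+2) = 1 from by omega,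
      show 2*s+3-(s+1) = s+2 from by omega,
      show 2*s+3-(s+2) = s+1 from by omega,
      show 2*s+4-(2*s+3) = 1 from by omega,
      show 2*s+5-(s+2) = s+3 from by omega]
  rw [show (2*s+5)! = (2*s+5)*((2*s+4)!) from rfl,
      show (2*s+4)! = (2*s+4)*((2*s+3)!) from rfl,
      show (2*s+3)! = (2*s+3)*((2*s+2)!) from rfl,
      show (2*s+2)! = (2*s+2)*((2*s+1)!) from rfl,
      show (s+3)! = (s+3)*((s+2)!) from rfl,
      show (s+2)! = (s+2)*((s+1)!) from rfl,
      show (s+1)! = (s+1)*(s !) from rfl,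
      Nat.factorial_one]
  have f1 : ((s ! : ℚ)) ≠ 0 := by exact_mod_cast s.factorial_ne_zero
  have f2 : (((2*s+1)! : ℚ)) ≠ 0 := by exact_mod_cast (2*s+1).factorial_ne_zero
  push_cast
  field_simp
  ring

lemma lemE : ∀ M : ℕ, TQ M M = (-1)^(M+1) * (((2*M+1).choose M : ℚ) - 1) := by
  intro M
  induction M with
  | zero => simp [TQ]
  | succ M ih =>
    have hA := LA M M le_rfl
    rw [TQ_succ]
    have e : TQ (M+1) M = WQ M M - TQ M M := by linarith
    rw [e, ih]
    match M with
    | 0 =>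
      rw [WQ_zero]
      simp only [tQ]
      norm_num [Nat.choose]
    | (s+1) => exact I2 s

lemma GQ_zero (m : ℕ) : GQ m 0 = 0 := by norm_num [GQ, RQ]

lemma bQ_zero (m : ℕ) : bQ m 0 = 0 := by norm_num [bQ]

lemma I3 (m : ℕ) (hm : 1 ≤ m) : bQ (m+1) 1 + bQ m 1 = GQ m 1 - GQ m 0 := by
  have hmge : (1:ℚ) ≤ (m:ℚ) := by exact_mod_cast hm
  have hm0 : ((m:ℚ)) ≠ 0 := by linarith
  have hm1 : ((m:ℚ)+1) ≠ 0 := by positivity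
  have hm2 : ((m:ℚ)+2) ≠ 0 := by positivity
  have hm3 : ((m:ℚ)+3) ≠ 0 := by positivity
  have hm4 : ((m:ℚ)+4) ≠ 0 := by positivity
  rw [GQ_zero]
  simp only [bQ, GQ, RQ]
  rw [show 2*1-1 = 1 from rfl, show m+1+1+1 = m+3 from by ring, show m+1+1 = m+2 from by ring,
      show 2*1 = 2 from rfl]
  rw [Nat.choose_self]
  have c2 : ((m+2).choose 2 : ℚ) = (((m:ℚ)+2)*((m:ℚ)+1))/2 := by linarith [choose2 m]
  have c3 : ((m+3).choose 2 : ℚ) = (((m:ℚ)+3)*((m:ℚ)+2))/2 := by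
    have := choose2 (m+1)
    rw [show (m+1)+2 = m+3 from by ring] at this
    push_cast at this
    linarith
  rw [c2, c3]
  push_cast
  field_simp
  ring

lemma I4 (s d : ℕ) : bQ (s+2+d+1) (s+2) + bQ (s+2+d) (s+2)
    = GQ (s+2+d) (s+2) - GQ (s+2+d) (s+1) := by
  simp only [bQ, GQ, RQ]
  rw [show 2*(s+2)-1 = 2*s+3 from by omega,
      show s+2+d+1+(s+2)+1 = 2*s+d+6 from by ring,
      show s+2+d+(s+2)+1 = 2*s+d+5 from by ring,
      show 2*(s+2) = 2*s+4 from by ring,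
      show 2*(s+1)-1 = 2*s+1 from by omega,
      show s+2+d+(s+1)+1 = 2*s+d+4 from by ring,
      show 2*(s+1) = 2*s+2 from by ring]
  rw [Nat.cast_choose ℚ (show s+2 ≤ 2*s+3 by omega),
      Nat.cast_choose ℚ (show 2*s+4 ≤ 2*s+d+6 by omega),
      Nat.cast_choose ℚ (show 2*s+4 ≤ 2*s+d+5 by omega),
      Nat.cast_choose ℚ (show s+1 ≤ 2*s+1 by omega),
      Nat.cast_choose ℚ (show 2*s+2 ≤ 2*s+d+4 by omega)]
  rw [show 2*s+3-(s+2) = s+1 from by omega,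
      show 2*s+d+6-(2*s+4) = d+2 from by omega,
      show 2*s+d+5-(2*s+4) = d+1 from by omega,
      show 2*s+1-(s+1) = s from by omega,
      show 2*s+d+4-(2*s+2) = d+2 from by omega]
  rw [show (2*s+d+6)! = (2*s+d+6)*((2*s+d+5)!) from rfl,
      show (2*s+d+5)! = (2*s+d+5)*((2*s+d+4)!) from rfl,
      show (2*s+4)! = (2*s+4)*((2*s+3)!) from rfl,
      show (2*s+3)! = (2*s+3)*((2*s+2)!) from rfl,
      show (2*s+2)! = (2*s+2)*((2*s+1)!) from rfl,
      show (s+2)! = (s+2)*((s+1)!) from rfl,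
      show (d+2)! = (d+2)*((d+1)!) from rfl,
      show (s+1)! = (s+1)*(s !) from rfl]
  have f1 : ((s ! : ℚ)) ≠ 0 := by exact_mod_cast s.factorial_ne_zero
  have f2 : (((2*s+1)! : ℚ)) ≠ 0 := by exact_mod_cast (2*s+1).factorial_ne_zero
  have f3 : (((2*s+d+4)! : ℚ)) ≠ 0 := by exact_mod_cast (2*s+d+4).factorial_ne_zero
  have f4 : (((d+1)! : ℚ)) ≠ 0 := by exact_mod_cast (d+1).factorial_ne_zero
  push_cast
  field_simp
  ring

lemma LP (m : ℕ) (hm : 1 ≤ m) : ∀ κ, κ ≤ m →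
    ∑ i ∈ Finset.range (κ+1), (bQ (m+1) i + bQ m i) = GQ m κ := by
  intro κ
  induction κ with
  | zero => intro _; simp [bQ_zero, GQ_zero]
  | succ κ ih =>
    intro h
    rw [Finset.sum_range_succ, ih (by omega)]
    have key : bQ (m+1) (κ+1) + bQ m (κ+1) = GQ m (κ+1) - GQ m κ := by
      match κ, h with
      | 0, _ => simpa using I3 m hm
      | (s+1), h =>
        obtain ⟨d, rfl⟩ : ∃ d, m = s+2+d := ⟨m-(s+2), by omega⟩
        exact I4 s d
    linarith

lemma I5 (s : ℕ) : GQ (s+1) (s+1) + bQ (s+2) (s+2) - betaQ (s+1) = betaQ (s+2) := by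
  simp only [bQ, GQ, RQ, betaQ]
  rw [show 2*(s+1)+3 = 2*s+5 from by ring,
      show 2*(s+2)+3 = 2*s+7 from by ring,
      show 2*(s+1)-1 = 2*s+1 from by omega,
      show 2*(s+2)-1 = 2*s+3 from by omega,
      show s+1+(s+1)+1 = 2*s+3 from by ring,
      show s+2+(s+2)+1 = 2*s+5 from by ring,
      show 2*(s+1) = 2*s+2 from by ring,
      show 2*(s+2) = 2*s+4 from by ring,
      show (s+1)+1 = s+2 from rfl,
      show (s+2)+1 = s+3 from rfl]
  rw [Nat.cast_choose ℚ (show s+1 ≤ 2*s+1 by omega),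
      Nat.cast_choose ℚ (show 2*s+2 ≤ 2*s+3 by omega),
      Nat.cast_choose ℚ (show s+2 ≤ 2*s+3 by omega),
      Nat.cast_choose ℚ (show 2*s+4 ≤ 2*s+5 by omega),
      Nat.cast_choose ℚ (show s+2 ≤ 2*s+5 by omega),
      Nat.cast_choose ℚ (show s+3 ≤ 2*s+7 by omega)]
  rw [show 2*s+1-(s+1) = s from by omega,
      show 2*s+3-(2*s+2) = 1 from by omega,
      show 2*s+3-(s+2) = s+1 from by omega,
      show 2*s+5-(2*s+4) = 1 from by omega,
      show 2*s+5-(s+2) = s+3 from by omega,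
      show 2*s+7-(s+3) = s+4 from by omega]
  rw [show (2*s+7)! = (2*s+7)*((2*s+6)!) from rfl,
      show (2*s+6)! = (2*s+6)*((2*s+5)!) from rfl,
      show (2*s+5)! = (2*s+5)*((2*s+4)!) from rfl,
      show (2*s+4)! = (2*s+4)*((2*s+3)!) from rfl,
      show (2*s+3)! = (2*s+3)*((2*s+2)!) from rfl,
      show (2*s+2)! = (2*s+2)*((2*s+1)!) from rfl,
      show (s+4)! = (s+4)*((s+3)!) from rfl,
      show (s+3)! = (s+3)*((s+2)!) from rfl,
      show (s+2)! = (s+2)*((s+1)!) from rfl,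
      show (s+1)! = (s+1)*(s !) from rfl,
      Nat.factorial_one]
  have f1 : ((s ! : ℚ)) ≠ 0 := by exact_mod_cast s.factorial_ne_zero
  have f2 : (((2*s+1)! : ℚ)) ≠ 0 := by exact_mod_cast (2*s+1).factorial_ne_zero
  push_cast
  field_simp
  ring

lemma LB : ∀ m : ℕ, 1 ≤ m → BQ m = betaQ m := by
  intro m hm
  induction m, hm using Nat.le_induction with
  | base =>
    rw [BQ, Finset.sum_range_succ, Finset.sum_range_one, bQ_zero]
    simp only [bQ, betaQ]
    norm_num [show Nat.choose 5 2 = 10 from by decide, show Nat.choose 3 2 = 3 from by decide,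
      show Nat.choose 1 1 = 1 from by decide]
  | succ m hm ih =>
    have hP := LP m hm m le_rfl
    have h1 : BQ (m+1) = GQ m m - BQ m + bQ (m+1) (m+1) := by
      rw [BQ, Finset.sum_range_succ]
      have h2 : ∑ i ∈ Finset.range (m+1), bQ (m+1) i
          = (∑ i ∈ Finset.range (m+1), (bQ (m+1) i + bQ m i)) - BQ m := by
        rw [Finset.sum_add_distrib, BQ]; ring
      rw [h2, hP]
    rw [h1, ih]
    obtain ⟨s, rfl⟩ : ∃ s, m = s+1 := ⟨m-1, by omega⟩
    show GQ (s+1) (s+1) - betaQ (s+1) + bQ (s+2) (s+2) = betaQ (s+2)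
    linarith [I5 s]

/-! ### Sum manipulation -/

def SQ (m : ℕ) : ℚ := ∑ n ∈ Finset.Icc 2 (m+1), 1/((n:ℚ)+1) * TQ m (n-1)

lemma L_inner (m w : ℕ) :
    (∑ j ∈ Finset.Icc 1 w, (-1:ℚ)^(j-1) * ((2*j-1).choose j : ℚ) * ((m+j).choose (2*j-1) : ℚ))
    = TQ m w := by
  rw [← Finset.Ico_add_one_right_eq_Icc, Finset.sum_Ico_eq_sum_range, show w+1-1 = w from by omega, TQ]
  apply Finset.sum_congr rfl
  intro i _
  rw [tQ, show 1+i-1 = i from by omega, show 2*(1+i)-1 = 2*i+1 from by omega,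
      show m+(1+i) = m+i+1 from by omega, show 1+i = i+1 from by omega]

lemma L_conv (m : ℕ) :
    (∑ n ∈ Finset.Icc 2 (m + 1),
        (1 / ((n : ℚ) + 1)) *
          (∑ j ∈ Finset.Icc 1 (n - 1),
            (-1 : ℚ) ^ (j - 1) * (Nat.choose (2 * j - 1) j : ℚ) *
              (Nat.choose (m + j) (2 * j - 1) : ℚ))) = SQ m := by
  apply Finset.sum_congr rfl
  intro n _
  rw [L_inner m (n-1)]

lemma SQ_range (m : ℕ) : SQ m = ∑ k ∈ Finset.range m, 1/((k:ℚ)+3) * TQ m (k+1) := by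
  rw [SQ, ← Finset.Ico_add_one_right_eq_Icc, Finset.sum_Ico_eq_sum_range, show m+1+1-2 = m from by omega]
  apply Finset.sum_congr rfl
  intro k _
  rw [show 2+k-1 = k+1 from by omega]
  have : ((2+k : ℕ):ℚ)+1 = (k:ℚ)+3 := by push_cast; ring
  rw [this]

lemma L_WB (m k : ℕ) : 1/((k:ℚ)+3) * WQ m (k+1)
    = (2*(2*(m:ℚ)+3)/(((m:ℚ)+1)*((m:ℚ)+2))) * bQ m (k+1) := by
  have hm1 : ((m:ℚ)+1) ≠ 0 := by positivity
  have hm2 : ((m:ℚ)+2) ≠ 0 := by positivity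
  have hk3 : ((k:ℚ)+3) ≠ 0 := by positivity
  simp only [WQ, bQ]
  push_cast
  field_simp
  ring

lemma L_fin (m : ℕ) (hm : 1 ≤ m) :
    (2*(2*(m:ℚ)+3)/(((m:ℚ)+1)*((m:ℚ)+2))) * betaQ m
      + 1/((m:ℚ)+3) * ((-1)^(m+2) * (((2*m+3).choose (m+1) : ℚ) - 1))
    = (-1)^(m+1)*(1/((m:ℚ)+3)-1/((m:ℚ)+2)-1/((m:ℚ)+1)) := by
  have hm1 : ((m:ℚ)+1) ≠ 0 := by positivity
  have hm2 : ((m:ℚ)+2) ≠ 0 := by positivity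
  have hm3 : ((m:ℚ)+3) ≠ 0 := by positivity
  have hm5 : (2*(m:ℚ)+3) ≠ 0 := by positivity
  rw [betaQ]
  field_simp
  ring

lemma L_rec (m : ℕ) (hm : 1 ≤ m) :
    SQ (m+1) + SQ m = (-1)^(m+1)*(1/((m:ℚ)+3)-1/((m:ℚ)+2)-1/((m:ℚ)+1)) := by
  rw [SQ_range, SQ_range, Finset.sum_range_succ]
  have hsum : (∑ k ∈ Finset.range m, 1/((k:ℚ)+3) * TQ (m+1) (k+1))
      + (∑ k ∈ Finset.range m, 1/((k:ℚ)+3) * TQ m (k+1))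
      = (2*(2*(m:ℚ)+3)/(((m:ℚ)+1)*((m:ℚ)+2))) * BQ m := by
    rw [← Finset.sum_add_distrib]
    have : ∀ k ∈ Finset.range m, 1/((k:ℚ)+3) * TQ (m+1) (k+1) + 1/((k:ℚ)+3) * TQ m (k+1)
        = (2*(2*(m:ℚ)+3)/(((m:ℚ)+1)*((m:ℚ)+2))) * bQ m (k+1) := by
      intro k hk
      have hk' : k+1 ≤ m := by simpa using Finset.mem_range.mp hk
      have hA := LA m (k+1) hk'
      calc 1/((k:ℚ)+3) * TQ (m+1) (k+1) + 1/((k:ℚ)+3) * TQ m (k+1)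
          = 1/((k:ℚ)+3) * (TQ (m+1) (k+1) + TQ m (k+1)) := by ring
        _ = 1/((k:ℚ)+3) * WQ m (k+1) := by rw [hA]
        _ = _ := L_WB m k
    rw [Finset.sum_congr rfl this, ← Finset.mul_sum]
    congr 1
    rw [BQ, Finset.sum_range_succ']
    simp [bQ_zero]
  have hE : TQ (m+1) (m+1) = (-1)^(m+2) * (((2*m+3).choose (m+1) : ℚ) - 1) := by
    have h := lemE (m+1)
    rw [show 2*(m+1)+1 = 2*m+3 from by ring, show m+1+1 = m+2 from rfl] at h
    exact h
  have harr : (∑ k ∈ Finset.range m, 1/((k:ℚ)+3) * TQ (m+1) (k+1))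
      + 1/((m:ℚ)+3) * TQ (m+1) (m+1)
      + (∑ k ∈ Finset.range m, 1/((k:ℚ)+3) * TQ m (k+1))
      = ((∑ k ∈ Finset.range m, 1/((k:ℚ)+3) * TQ (m+1) (k+1))
        + (∑ k ∈ Finset.range m, 1/((k:ℚ)+3) * TQ m (k+1)))
        + 1/((m:ℚ)+3) * TQ (m+1) (m+1) := by ring
  rw [harr, hsum, LB m hm, hE]
  exact L_fin m hm

/-! ### Main theorem -/

theorem main_identity_appendix_A (m : ℕ) (hm : 1 ≤ m) :
    ∑ n ∈ Finset.Icc 2 (m + 1),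
        (1 / ((n : ℚ) + 1)) *
          (∑ j ∈ Finset.Icc 1 (n - 1),
            (-1 : ℚ) ^ (j - 1) * (Nat.choose (2 * j - 1) j : ℚ) *
              (Nat.choose (m + j) (2 * j - 1) : ℚ)) =
      (-1 : ℚ) ^ m * (H (m + 2) - H m - H (m + 1)) := by
  induction m, hm using Nat.le_induction with
  | base =>
    rw [L_conv]
    have h0 : H 0 = 0 := H_zero
    have h1 : H 1 = 1 := by have := H_succ 0; rw [h0] at this; norm_num at this; exact this
    have h2 : H 2 = 3/2 := by have := H_succ 1; rw [h1] at this; norm_num at this; exact this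
    have h3 : H 3 = 11/6 := by have := H_succ 2; rw [h2] at this; norm_num at this; exact this
    rw [show (1:ℕ)+2 = 3 from rfl, show (1:ℕ)+1 = 2 from rfl, h1, h2, h3]
    rw [SQ, show (1:ℕ)+1 = 2 from rfl, Finset.Icc_self, Finset.sum_singleton]
    rw [TQ, show (2:ℕ)-1 = 1 from rfl, Finset.sum_range_one, tQ]
    norm_num [Nat.choose_one_right, Nat.choose_self]
  | succ m hm ih =>
    rw [L_conv] at ih ⊢
    have hrec := L_rec m hm
    have e1 : H (m+1) = H m + 1/((m:ℚ)+1) := H_succ m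
    have e2 : H (m+2) = H (m+1) + 1/((((m+1):ℕ):ℚ)+1) := H_succ (m+1)
    have e3 : H (m+3) = H (m+2) + 1/((((m+2):ℕ):ℚ)+1) := H_succ (m+2)
    show SQ (m+1) = (-1)^(m+1) * (H (m+3) - H (m+1) - H (m+2))
    rw [e3, e2, e1]
    rw [e2, e1] at ih
    push_cast at hrec ih ⊢
    linear_combination hrec - ih
end
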